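/- arXiv:2403.11976 — 3 statements merged into one kernel-verified Lean document; each statement's English description precedes it below -/
import Mathlib

section
/- Let b, d, n be positive integers and let p be a partition of 2n of type D. Then d_BV([b^{2d}] ⊔ p) = ([(2d)^b] + d_BV(p))_D; explicitly, (([b^{2d}] ⊔ p)^*)_D = ([(2d)^b] + (p^*)_D)_D. -/
open Multiset

/-- The parts of a partition, listed in non-increasing order. -/
def sortedD (p : Multiset ℕ) : List ℕ := (p.sort (· ≤ ·)).reverse

/-- `p` is a partition of `n`: all parts are positive and they sum to `n`. -/
def IsPartitionOf (p : Multiset ℕ) (n : ℕ) : Prop :=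
  (∀ x ∈ p, 0 < x) ∧ p.sum = n

/-- Dominance order on partitions: `Dom p q` means `p ≥ q`, i.e. for every `k`
the sum of the `k` largest parts of `p` is at least that of `q`. -/
def Dom (p q : Multiset ℕ) : Prop :=
  ∀ k : ℕ, ((sortedD q).take k).sum ≤ ((sortedD p).take k).sum

/-- Strict dominance: `p > q`. -/
def SDom (p q : Multiset ℕ) : Prop := Dom p q ∧ p ≠ q

/-- Types of partitions. -/
inductive PType | B | C | D
  deriving DecidableEq

/-- A partition (of odd size) is of type `B` if every even part occurs with even
multiplicity; a partition (of even size) is of type `C` if every odd part occurs with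
even multiplicity, and of type `D` if every even part occurs with even multiplicity. -/
def OfType : PType → Multiset ℕ → Prop
  | .B, p => ∀ x, Even x → Even (p.count x)
  | .C, p => ∀ x, Odd x → Even (p.count x)
  | .D, p => ∀ x, Even x → Even (p.count x)

/-- Componentwise sum of two lists (the shorter one padded with zeros). -/
def addLists : List ℕ → List ℕ → List ℕ
  | [], l => l
  | a :: l, [] => a :: l
  | a :: l, b :: m => (a + b) :: addLists l m

/-- Componentwise sum `p + q` of two partitions. -/
def cwAdd (p q : Multiset ℕ) : Multiset ℕ := ↑(addLists (sortedD p) (sortedD q))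

/-- The rectangular partition `[b^m]` with `m` parts equal to `b`. -/
def rect (b m : ℕ) : Multiset ℕ := Multiset.replicate m b

/-- `p⁺`: add `1` to the largest part (`[1]` if `p` is empty). -/
def plusOp (p : Multiset ℕ) : Multiset ℕ :=
  match sortedD p with
  | [] => {1}
  | a :: l => (a + 1) ::ₘ ↑l

/-- `p⁻`: subtract `1` from the smallest part, discarding it if it becomes `0`. -/
def minusOp (p : Multiset ℕ) : Multiset ℕ :=
  match p.sort (· ≤ ·) with
  | [] => 0
  | a :: l => if a = 1 then ↑l else (a - 1) ::ₘ ↑l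

/-- The largest part of a partition (`0` if empty). -/
def maxPart (p : Multiset ℕ) : ℕ := (sortedD p).headI

/-- The transpose (conjugate) partition: the `i`-th part of `p^*` is the number of
parts of `p` that are `≥ i`. -/
def transposeP (p : Multiset ℕ) : Multiset ℕ :=
  ↑((List.range (maxPart p)).map fun i => Multiset.card (p.filter fun x => i + 1 ≤ x))

/-- `q` is the `X`-collapse of `p`: the greatest partition of type `X` (of the same
size) dominated by `p` in the dominance order. -/
def IsCollapse (X : PType) (p q : Multiset ℕ) : Prop :=
  IsPartitionOf q p.sum ∧ OfType X q ∧ Dom p q ∧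
    ∀ r : Multiset ℕ, IsPartitionOf r p.sum → OfType X r → Dom p r → Dom q r

/-- The `X`-collapse of `p` (junk value if it does not exist). -/
noncomputable def collapse (X : PType) (p : Multiset ℕ) : Multiset ℕ :=
  letI := Classical.propDecidable (∃ q, IsCollapse X p q)
  if h : ∃ q, IsCollapse X p q then h.choose else 0

/-- Barbasch–Vogan duality for partitions of type `B`: `d_BV(p) = ((p^-)_C)^*`. -/
noncomputable def dBV_B (p : Multiset ℕ) : Multiset ℕ :=
  transposeP (collapse .C (minusOp p))

/-- Barbasch–Vogan duality for partitions of type `C`: `d_BV(p) = ((p^+)_B)^*`. -/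
noncomputable def dBV_C (p : Multiset ℕ) : Multiset ℕ :=
  transposeP (collapse .B (plusOp p))

/-- Barbasch–Vogan duality for partitions of type `D`: `d_BV(p) = (p^*)_D`. -/
noncomputable def dBV_D (p : Multiset ℕ) : Multiset ℕ :=
  collapse .D (transposeP p)

namespace BVAux
open List Finset

/-- 0-indexed entry of a list, 0 beyond the end. -/
def pt (L : List ℕ) (t : ℕ) : ℕ := L.getD t 0

/-- Sum of first `k` entries. -/
def pS (L : List ℕ) (k : ℕ) : ℕ := ∑ t ∈ Finset.range k, pt L t

lemma pt_nil (t : ℕ) : pt [] t = 0 := by cases t <;> rfl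

lemma pt_eq_zero (L : List ℕ) {t : ℕ} (h : L.length ≤ t) : pt L t = 0 := by
  rw [pt, List.getD_eq_default]
  omega

lemma pt_pos (L : List ℕ) (hpos : ∀ x ∈ L, 0 < x) {t : ℕ} (h : t < L.length) :
    0 < pt L t := by
  rw [pt, List.getD_eq_getElem L 0 h]
  exact hpos _ (L.getElem_mem h)

lemma pS_zero (L : List ℕ) : pS L 0 = 0 := rfl

lemma pS_succ (L : List ℕ) (k : ℕ) : pS L (k + 1) = pS L k + pt L k :=
  Finset.sum_range_succ _ _

lemma pS_take (L : List ℕ) (k : ℕ) : (L.take k).sum = pS L k := by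
  induction L generalizing k with
  | nil => simp [pS, pt_nil]
  | cons a L ih =>
    cases k with
    | zero => simp [pS]
    | succ k =>
      rw [List.take_succ_cons, List.sum_cons, ih k, pS, pS, Finset.sum_range_succ']
      simp only [pt, List.getD_cons_succ, List.getD_cons_zero]
      omega

lemma pS_mono (L : List ℕ) : Monotone (pS L) := by
  intro a b hab
  exact Finset.sum_le_sum_of_subset (Finset.range_subset_range.2 hab)

lemma pS_eq_sum (L : List ℕ) {k : ℕ} (h : L.length ≤ k) : pS L k = L.sum := by
  rw [← pS_take, List.take_of_length_le h]

lemma pS_le_sum (L : List ℕ) (k : ℕ) : pS L k ≤ L.sum := by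
  rw [← pS_take]
  exact List.Sublist.sum_le_sum (L.take_sublist k) (by intro x _; positivity)

/-- Descending condition via `pt`. -/
def Desc (L : List ℕ) : Prop := ∀ t, pt L (t + 1) ≤ pt L t

lemma desc_iff_sorted (L : List ℕ) : Desc L ↔ L.Pairwise (· ≥ ·) := by
  rw [← List.isChain_iff_pairwise, List.isChain_iff_getElem]
  constructor
  · intro h i hi
    have hi' : i + 1 < L.length := by omega
    have := h i
    rw [pt, pt, List.getD_eq_getElem L 0 hi',
      List.getD_eq_getElem L 0 (by omega : i < L.length)] at this
    simpa [List.get_eq_getElem] using this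
  · intro h t
    by_cases ht : t + 1 < L.length
    · have := h t (by omega)
      rw [pt, pt, List.getD_eq_getElem L 0 ht, List.getD_eq_getElem L 0 (by omega : t < L.length)]
      simpa [List.get_eq_getElem] using this
    · rw [pt_eq_zero L (by omega)]
      exact Nat.zero_le _

lemma Desc.pt_anti {L : List ℕ} (h : Desc L) {s t : ℕ} (hst : s ≤ t) :
    pt L t ≤ pt L s := by
  induction t with
  | zero =>
    have : s = 0 := by omega
    subst this; exact le_refl _
  | succ t ih =>
    rcases Nat.eq_or_lt_of_le hst with rfl | hlt
    · exact le_refl _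
    · exact le_trans (h t) (ih (by omega))

lemma eq_of_pt {L M : List ℕ} (hL : ∀ x ∈ L, 0 < x) (hM : ∀ x ∈ M, 0 < x)
    (h : ∀ t, pt L t = pt M t) : L = M := by
  induction L generalizing M with
  | nil =>
    cases M with
    | nil => rfl
    | cons b M =>
      have := h 0
      simp [pt_nil, pt] at this
      exact absurd this.symm (by have := hM b (by simp); omega)
  | cons a L ih =>
    cases M with
    | nil =>
      have := h 0
      simp [pt_nil, pt] at this
      exact absurd this (by have := hL a (by simp); omega)
    | cons b M =>
      have h0 := h 0
      simp only [pt, List.getD_cons_zero] at h0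
      subst h0
      rw [ih (fun x hx => hL x (List.mem_cons_of_mem _ hx))
        (fun x hx => hM x (List.mem_cons_of_mem _ hx))
        (fun t => by simpa [pt] using h (t + 1))]

lemma len_le_sum (L : List ℕ) (hpos : ∀ x ∈ L, 0 < x) : L.length ≤ L.sum := by
  induction L with
  | nil => simp
  | cons a L ih =>
    simp only [List.length_cons, List.sum_cons]
    have := hpos a (by simp)
    have := ih (fun x hx => hpos x (by simp [hx]))
    omega

/-! ### sortedD facts -/

lemma sortedD_coe_multiset (q : Multiset ℕ) : (↑(sortedD q) : Multiset ℕ) = q := by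
  rw [sortedD, Multiset.coe_eq_coe.2 (List.reverse_perm _), Multiset.sort_eq]

lemma sortedD_sorted (q : Multiset ℕ) : (sortedD q).Pairwise (· ≥ ·) := by
  rw [sortedD, List.pairwise_reverse]
  exact List.Pairwise.imp (fun {a b} (h : a ≤ b) => h) (Multiset.pairwise_sort q (· ≤ ·))

lemma sortedD_desc (q : Multiset ℕ) : Desc (sortedD q) :=
  (desc_iff_sorted _).2 (sortedD_sorted q)

lemma sortedD_of_sorted {L : List ℕ} (h : L.Pairwise (· ≥ ·)) : sortedD (↑L) = L := by
  rw [sortedD]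
  have h1 : Multiset.sort (↑L : Multiset ℕ) (· ≤ ·) = L.reverse := by
    apply List.Perm.eq_of_pairwise' (r := (· ≤ ·))
    · exact Multiset.pairwise_sort _ _
    · rw [List.pairwise_reverse]
      exact List.Pairwise.imp (fun {a b} (h : a ≥ b) => h) h
    · rw [← Multiset.coe_eq_coe, Multiset.sort_eq]
      exact (Multiset.coe_eq_coe.2 (List.reverse_perm _)).symm
  rw [h1, List.reverse_reverse]

lemma sortedD_sum (q : Multiset ℕ) : (sortedD q).sum = q.sum := by
  conv_rhs => rw [← sortedD_coe_multiset q]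
  simp

lemma sortedD_mem {q : Multiset ℕ} {x : ℕ} : x ∈ sortedD q ↔ x ∈ q := by
  conv_rhs => rw [← sortedD_coe_multiset q]
  simp

lemma dom_iff (p q : Multiset ℕ) :
    Dom p q ↔ ∀ k, pS (sortedD q) k ≤ pS (sortedD p) k := by
  unfold Dom
  simp only [pS_take]

end BVAux
namespace BVAux
open List Finset

/-- Type-D condition at the list level. -/
def TD (L : List ℕ) : Prop := ∀ x, Even x → Even (L.count x)

lemma par1 {a m : ℕ} (h : Even a → Even m) : m * a % 2 = m % 2 := by
  rcases Nat.even_or_odd a with ha | ha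
  · have hm := h ha
    have h1 : (m * a) % 2 = 0 := Nat.even_iff.1 (hm.mul_right a)
    have h2 : m % 2 = 0 := Nat.even_iff.1 hm
    omega
  · have h1 : a % 2 = 1 := Nat.odd_iff.1 ha
    rw [Nat.mul_mod, h1]
    omega

lemma par2 {a m : ℕ} (h : m * a % 2 ≠ m % 2) : Even a := by
  by_contra hodd
  exact h (par1 (fun he => absurd he hodd))

lemma desc_le_head {L : List ℕ} (hd : Desc L) {x : ℕ} (hx : x ∈ L) : x ≤ pt L 0 := by
  rcases List.mem_iff_getElem.1 hx with ⟨t, ht, rfl⟩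
  rw [← List.getD_eq_getElem L 0 ht]
  exact hd.pt_anti (Nat.zero_le t)

lemma dropWhile_cons_head_false {p : ℕ → Bool} : ∀ (l : List ℕ) {h : ℕ} {rest : List ℕ},
    List.dropWhile p l = h :: rest → p h = false := by
  intro l
  induction l with
  | nil => intro h rest hc; simp [List.dropWhile] at hc
  | cons a l ih =>
    intro h rest hc
    rw [List.dropWhile_cons] at hc
    by_cases hpa : p a = true
    · rw [if_pos hpa] at hc
      exact ih hc
    · rw [if_neg hpa] at hc
      cases hc
      simpa using hpa

lemma desc_sublist {L M : List ℕ} (hs : M.Sublist L) (hd : Desc L) : Desc M :=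
  (desc_iff_sorted M).2 (((desc_iff_sorted L).1 hd).sublist hs)

/-- Block decomposition of a nonempty descending positive list. -/
lemma exists_block (L : List ℕ) (hne : L ≠ []) (hd : Desc L) (hp : ∀ x ∈ L, 0 < x) :
    ∃ a m D, 0 < a ∧ 0 < m ∧ (∀ x ∈ D, x < a) ∧ Desc D ∧ (∀ x ∈ D, 0 < x) ∧
      L = List.replicate m a ++ D := by
  obtain ⟨a, T, rfl⟩ := List.exists_cons_of_ne_nil hne
  have hWD := List.takeWhile_append_dropWhile (p := fun x => x == a) (l := a :: T)
  have hWrep : List.takeWhile (fun x => x == a) (a :: T)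
      = List.replicate (List.takeWhile (fun x => x == a) (a :: T)).length a := by
    rw [List.eq_replicate_iff]
    exact ⟨rfl, fun b hb => by simpa using List.mem_takeWhile_imp hb⟩
  have hDsub : (List.dropWhile (fun x => x == a) (a :: T)).Sublist (a :: T) :=
    List.dropWhile_sublist _
  have hDd : Desc (List.dropWhile (fun x => x == a) (a :: T)) := desc_sublist hDsub hd
  have hDpos : ∀ x ∈ List.dropWhile (fun x => x == a) (a :: T), 0 < x :=
    fun x hx => hp x (hDsub.subset hx)
  have hDlt : ∀ x ∈ List.dropWhile (fun x => x == a) (a :: T), x < a := by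
    cases hc : List.dropWhile (fun x => x == a) (a :: T) with
    | nil => simp
    | cons h rest =>
      intro x hx
      have hha : (h == a) = false := dropWhile_cons_head_false (p := fun x => x == a) _ hc
      have hmem : h ∈ a :: T := hDsub.subset (by rw [hc]; simp)
      have hle : h ≤ a := by simpa [pt] using desc_le_head hd hmem
      have hlt : h < a := lt_of_le_of_ne hle (by simpa using hha)
      rw [hc] at hDd
      have := desc_le_head hDd hx
      simp [pt] at this
      omega
  have hWlen : 0 < (List.takeWhile (fun x => x == a) (a :: T)).length := by
    rw [List.takeWhile_cons]
    simp
  refine ⟨a, _, _, hp a (by simp), hWlen, hDlt, hDd, hDpos, ?_⟩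
  conv_lhs => rw [← hWD]
  conv_lhs => rw [hWrep]

/-! computations on a block `replicate m a ++ D` -/

section Block
variable {a m : ℕ} {D : List ℕ}

lemma count_block (x : ℕ) :
    (List.replicate m a ++ D).count x = (if x = a then m else 0) + D.count x := by
  rw [List.count_append, List.count_replicate]
  by_cases h : x = a
  · subst h; simp
  · have h' : ¬ (a == x) = true := by
      simp only [beq_iff_eq]
      exact fun hh => h hh.symm
    rw [if_neg h', if_neg h]

lemma pt_block_lt {t : ℕ} (ht : t < m) : pt (List.replicate m a ++ D) t = a := by
  rw [pt, List.getD_append _ _ _ _ (by simpa using ht), List.getD_eq_getElem _ _ (by simpa using ht)]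
  simp

lemma pt_block_ge (t : ℕ) : pt (List.replicate m a ++ D) (m + t) = pt D t := by
  rw [pt, List.getD_append_right _ _ _ _ (by simp)]
  simp [pt]

lemma pS_block_ge (t : ℕ) : pS (List.replicate m a ++ D) (m + t) = m * a + pS D t := by
  rw [← pS_take, ← pS_take]
  have : m + t = (List.replicate m a).length + t := by simp
  rw [this, List.take_length_add_append, List.sum_append, List.sum_replicate_nat]

lemma pS_block_le {k : ℕ} (hk : k ≤ m) : pS (List.replicate m a ++ D) k = k * a := by
  rw [← pS_take, List.take_append_of_le_length (by simpa using hk), List.take_replicate,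
    min_eq_left hk, List.sum_replicate_nat]

lemma pt_D_zero_lt (ha : 0 < a) (hlt : ∀ x ∈ D, x < a) : pt D 0 < a := by
  cases D with
  | nil => simpa [pt_nil] using ha
  | cons h rest => simpa [pt] using hlt h (by simp)

lemma TD_block (ha : 0 < a) (hlt : ∀ x ∈ D, x < a) :
    TD (List.replicate m a ++ D) ↔ ((Even a → Even m) ∧ TD D) := by
  have hDa : D.count a = 0 := by
    rw [List.count_eq_zero]
    intro hmem
    exact absurd (hlt a hmem) (lt_irrefl a)
  constructor
  · intro h
    refine ⟨fun he => ?_, fun x hx => ?_⟩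
    · have := h a he
      rw [count_block] at this
      simpa [hDa] using this
    · by_cases hxa : x = a
      · subst hxa; simp [hDa]
      · have := h x hx
        rw [count_block, if_neg hxa] at this
        simpa using this
  · rintro ⟨h1, h2⟩ x hx
    rw [count_block]
    by_cases hxa : x = a
    · subst hxa
      simp only [if_pos rfl, hDa, add_zero]
      exact h1 hx
    · simpa [hxa] using h2 x hx

end Block

/-- M1: a type-D partition has good parity at every corner. -/
lemma TD_corner_parity : ∀ (n : ℕ) (L : List ℕ), L.length ≤ n → Desc L → (∀ x ∈ L, 0 < x) →
    TD L → ∀ k, pt L k ≠ pt L (k + 1) → pS L (k + 1) % 2 = (k + 1) % 2 := by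
  intro n
  induction n with
  | zero =>
    intro L hlen _ _ _ k hc
    have hLnil : L = [] := List.length_eq_zero_iff.1 (by omega)
    subst hLnil
    simp [pt_nil] at hc
  | succ n ih =>
    intro L hlen hd hp hT k hc
    rcases eq_or_ne L [] with rfl | hne
    · simp [pt_nil] at hc
    obtain ⟨a, m, D, ha, hm, hlt, hDd, hDp, rfl⟩ := exists_block L hne hd hp
    have hDlen : D.length ≤ n := by
      have := List.length_append (as := List.replicate m a) (bs := D)
      simp only [List.length_replicate] at this
      omega
    obtain ⟨hma, hTD⟩ := (TD_block ha hlt).1 hT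
    rcases lt_trichotomy (k + 1) m with h1 | h1 | h1
    · exact absurd (by rw [pt_block_lt (by omega), pt_block_lt h1]) hc
    · rw [h1, pS_block_le (le_refl m)]
      exact par1 hma
    · obtain ⟨t, rfl⟩ : ∃ t, k = m + t := ⟨k - m, by omega⟩
      have hDc : pt D t ≠ pt D (t + 1) := by
        rw [← pt_block_ge (a := a) (m := m) t, ← pt_block_ge (a := a) (m := m) (t + 1)]
        rw [show m + (t + 1) = m + t + 1 by ring]
        exact hc
      have hres := ih D hDlen hDd hDp hTD t hDc
      have hg := par1 hma
      rw [show m + t + 1 = m + (t + 1) by ring, pS_block_ge]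
      omega

/-- M2: good parity at all corners implies type D. -/
lemma corner_parity_TD : ∀ (n : ℕ) (L : List ℕ), L.length ≤ n → Desc L → (∀ x ∈ L, 0 < x) →
    (∀ k, pt L k ≠ pt L (k + 1) → pS L (k + 1) % 2 = (k + 1) % 2) → TD L := by
  intro n
  induction n with
  | zero =>
    intro L hlen _ _ _
    have hLnil : L = [] := List.length_eq_zero_iff.1 (by omega)
    subst hLnil
    intro x _
    simp
  | succ n ih =>
    intro L hlen hd hp hC
    rcases eq_or_ne L [] with rfl | hne
    · intro x _; simp
    obtain ⟨a, m, D, ha, hm, hlt, hDd, hDp, rfl⟩ := exists_block L hne hd hp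
    have hDlen : D.length ≤ n := by
      have := List.length_append (as := List.replicate m a) (bs := D)
      simp only [List.length_replicate] at this
      omega
    have hcm : pt (List.replicate m a ++ D) (m - 1) ≠ pt (List.replicate m a ++ D) (m - 1 + 1) := by
      rw [pt_block_lt (by omega), show m - 1 + 1 = m + 0 by omega, pt_block_ge]
      have := pt_D_zero_lt ha hlt
      omega
    have hgoodm : m * a % 2 = m % 2 := by
      have := hC (m - 1) hcm
      rw [show m - 1 + 1 = m by omega, pS_block_le (le_refl m)] at this
      rw [this]
    have hma : Even a → Even m := by
      intro hea
      have : m * a % 2 = 0 := Nat.even_iff.1 (hea.mul_left m)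
      rw [Nat.even_iff]
      omega
    refine (TD_block ha hlt).2 ⟨hma, ih D hDlen hDd hDp ?_⟩
    intro t htc
    have hbc : pt (List.replicate m a ++ D) (m + t) ≠ pt (List.replicate m a ++ D) (m + t + 1) := by
      rw [pt_block_ge, show m + t + 1 = m + (t + 1) by ring, pt_block_ge]
      exact htc
    have := hC (m + t) hbc
    rw [show m + t + 1 = m + (t + 1) by ring, pS_block_ge] at this
    omega

/-- M3: at the first bad corner, the part is even. -/
lemma first_bad_corner_even : ∀ (n : ℕ) (L : List ℕ), L.length ≤ n → Desc L →
    (∀ x ∈ L, 0 < x) → ∀ k, pt L k ≠ pt L (k + 1) → pS L (k + 1) % 2 ≠ (k + 1) % 2 →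
    (∀ t, t < k → pt L t ≠ pt L (t + 1) → pS L (t + 1) % 2 = (t + 1) % 2) →
    Even (pt L k) := by
  intro n
  induction n with
  | zero =>
    intro L hlen _ _ k hc _ _
    have hLnil : L = [] := List.length_eq_zero_iff.1 (by omega)
    subst hLnil
    simp [pt_nil] at hc
  | succ n ih =>
    intro L hlen hd hp k hc hbad hgood
    rcases eq_or_ne L [] with rfl | hne
    · simp [pt_nil] at hc
    obtain ⟨a, m, D, ha, hm, hlt, hDd, hDp, rfl⟩ := exists_block L hne hd hp
    have hDlen : D.length ≤ n := by
      have := List.length_append (as := List.replicate m a) (bs := D)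
      simp only [List.length_replicate] at this
      omega
    rcases lt_trichotomy (k + 1) m with h1 | h1 | h1
    · exact absurd (by rw [pt_block_lt (by omega), pt_block_lt h1]) hc
    · rw [h1, pS_block_le (le_refl m)] at hbad
      rw [pt_block_lt (by omega)]
      exact par2 hbad
    · -- k + 1 > m
      obtain ⟨t, rfl⟩ : ∃ t, k = m + t := ⟨k - m, by omega⟩
      -- corner at m is earlier and good
      have hcm : pt (List.replicate m a ++ D) (m - 1) ≠ pt (List.replicate m a ++ D) (m - 1 + 1) := by
        rw [pt_block_lt (by omega), show m - 1 + 1 = m + 0 by omega, pt_block_ge]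
        have := pt_D_zero_lt ha hlt
        omega
    -- more below
      have hgoodm : m * a % 2 = m % 2 := by
        have := hgood (m - 1) (by omega) hcm
        rw [show m - 1 + 1 = m by omega, pS_block_le (le_refl m)] at this
        rw [this]
      have hDc : pt D t ≠ pt D (t + 1) := by
        rw [← pt_block_ge (a := a) (m := m) t, ← pt_block_ge (a := a) (m := m) (t + 1),
          show m + (t + 1) = m + t + 1 by ring]
        exact hc
      have hDbad : pS D (t + 1) % 2 ≠ (t + 1) % 2 := by
        intro hcontra
        apply hbad
        rw [show m + t + 1 = m + (t + 1) by ring, pS_block_ge]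
        omega
      have hDgood : ∀ s, s < t → pt D s ≠ pt D (s + 1) → pS D (s + 1) % 2 = (s + 1) % 2 := by
        intro s hs hsc
        have hbc : pt (List.replicate m a ++ D) (m + s) ≠ pt (List.replicate m a ++ D) (m + s + 1) := by
          rw [pt_block_ge, show m + s + 1 = m + (s + 1) by ring, pt_block_ge]
          exact hsc
        have := hgood (m + s) (by omega) hbc
        rw [show m + s + 1 = m + (s + 1) by ring, pS_block_ge] at this
        omega
      have := ih D hDlen hDd hDp t hDc hDbad hDgood
      rw [pt_block_ge]
      exact this

end BVAux
namespace BVAux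
open List Finset

/-- Key lemma: if `r` is type D and dominated by the concave bound
`U k = pS L k + 2d·min(k,b)`, then on the interval `[i,j)` of a "first defect" of `L`,
`r` stays strictly below `U`. -/
lemma step_bound (L : List ℕ) (hLd : Desc L) (i j dd bb : ℕ)
    (hi : 1 ≤ i) (hij : i < j)
    (hbadmid : ∀ k, i ≤ k → k < j → pS L k % 2 ≠ k % 2)
    (hmid : ∀ k, i < k → k < j → pt L (k - 1) + 1 = pt L (i - 1))
    (hiv : 2 ≤ pt L (i - 1))
    (hveven : Even (pt L (i - 1)))
    (hjlt : pt L (j - 1) + 2 ≤ pt L (i - 1))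
    (R : List ℕ) (hRd : Desc R) (hRp : ∀ x ∈ R, 0 < x) (hRT : TD R)
    (hRU : ∀ k, pS R k ≤ pS L k + 2 * dd * min k bb) :
    ∀ k, i ≤ k → k < j → pS R k + 1 ≤ pS L k + 2 * dd * min k bb := by
  set v := pt L (i - 1) with hv
  set U : ℕ → ℕ := fun k => pS L k + 2 * dd * min k bb with hU
  set ε : ℕ → ℕ := fun k => if k < bb then 2 * dd else 0 with hε
  have hUstep : ∀ s, U (s + 1) = U s + (pt L s + ε s) := by
    intro s
    simp only [hU, hε]
    rw [pS_succ]
    by_cases h : s < bb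
    · rw [if_pos h, min_eq_left (by omega), min_eq_left (by omega)]
      ring
    · rw [if_neg h, min_eq_right (by omega), min_eq_right (by omega)]
      ring
  have hεanti : ∀ s t, s ≤ t → ε t ≤ ε s := by
    intro s t hst
    simp only [hε]
    by_cases h : t < bb
    · rw [if_pos h, if_pos (by omega)]
    · rw [if_neg h]
      omega
  have hδanti : ∀ t, 1 ≤ t → pt L t + ε t ≤ pt L (t - 1) + ε (t - 1) := by
    intro t ht
    have h1 := hLd.pt_anti (show t - 1 ≤ t by omega)
    have h2 := hεanti (t - 1) t (by omega)
    omega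
  have hUpar : ∀ k, U k % 2 = pS L k % 2 := by
    intro k
    simp only [hU]
    have : 2 * dd * (k ⊓ bb) = 2 * (dd * (k ⊓ bb)) := by ring
    omega
  -- corner lemma on R
  have hA : ∀ t, 1 ≤ t → pS R t % 2 ≠ t % 2 → pt R (t - 1) = pt R t := by
    intro t ht hb
    by_contra hne
    apply hb
    have := TD_corner_parity R.length R le_rfl hRd hRp hRT (t - 1)
      (by rw [show t - 1 + 1 = t by omega]; exact hne)
    rw [show t - 1 + 1 = t by omega] at this
    exact this
  -- squeeze lemma
  have hB : ∀ t, 1 ≤ t → pS R t = U t → pt R (t - 1) = pt R t →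
      pS R (t + 1) = U (t + 1) ∧ pt R t + U t = U (t + 1) := by
    intro t ht heq hnc
    have e1 : pS R (t - 1) + pt R (t - 1) = pS R t := by
      have := pS_succ R (t - 1)
      rw [show t - 1 + 1 = t by omega] at this
      omega
    have e2 : pS R (t + 1) = pS R t + pt R t := pS_succ R t
    have e3 : pS R (t - 1) ≤ U (t - 1) := hRU _
    have e4 : pS R (t + 1) ≤ U (t + 1) := hRU _
    have e5 : U t = U (t - 1) + (pt L (t - 1) + ε (t - 1)) := by
      have := hUstep (t - 1)
      rw [show t - 1 + 1 = t by omega] at this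
      exact this
    have e6 : U (t + 1) = U t + (pt L t + ε t) := hUstep t
    have e7 := hδanti t ht
    -- δ(t-1) ≤ w from e1,e3,e5,heq ; w ≤ δ t from e2,e4,e6 ; δ t ≤ δ(t-1)
    omega
  -- main argument
  intro k hik hkj
  by_contra hcon
  have heqk : pS R k = U k := by
    have := hRU k
    simp only [hU] at this ⊢
    omega
  have hbadk : U k % 2 ≠ k % 2 := by
    rw [hUpar]
    exact hbadmid k hik hkj
  have hk1 : 1 ≤ k := le_trans hi hik
  have hnck := hA k hk1 (by rw [heqk]; exact hbadk)
  obtain ⟨hS1, hw1⟩ := hB k hk1 heqk hnck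
  -- w = pt R k = δ k = δ (k-1)
  have hwδ : pt R k = pt L k + ε k := by
    have := hUstep k
    omega
  have hwδ' : pt L k + ε k = pt L (k - 1) + ε (k - 1) := by
    -- from the squeeze: δ(k-1) ≤ w and w ≤ δ k ≤ δ(k-1)
    have e1 : pS R (k - 1) + pt R (k - 1) = pS R k := by
      have := pS_succ R (k - 1)
      rw [show k - 1 + 1 = k by omega] at this
      omega
    have e3 : pS R (k - 1) ≤ U (k - 1) := hRU _
    have e5 : U k = U (k - 1) + (pt L (k - 1) + ε (k - 1)) := by
      have := hUstep (k - 1)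
      rw [show k - 1 + 1 = k by omega] at this
      exact this
    have e7 := hδanti k hk1
    omega
  -- case k + 1 = j : contradiction
  rcases eq_or_lt_of_le (show k + 1 ≤ j by omega) with hkj1 | hkj1
  · -- pt L k = pt L (j-1) ≤ v - 2 but pt L (k-1) ≥ v - 1
    have hptk : pt L k = pt L (j - 1) := by rw [← hkj1]; simp
    have hptk1 : v - 1 ≤ pt L (k - 1) := by
      rcases eq_or_lt_of_le hik with rfl | hik'
      · omega
      · have := hmid k hik' hkj
        omega
    have := hεanti (k - 1) k (by omega)
    omega
  · -- k + 1 < j : w is odd, propagate to infinity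
    have hptLk : pt L k + 1 = v := by
      have := hmid (k + 1) (by omega) hkj1
      simpa using this
    have hwodd : pt R k % 2 = 1 := by
      have hv2 : v % 2 = 0 := Nat.even_iff.1 hveven
      have hε2 : ε k % 2 = 0 := by
        simp only [hε]
        split <;> omega
      omega
    set w := pt R k with hwdef
    -- invariant
    have key : ∀ s : ℕ, pS R (k + s) = U (k + s) ∧ U (k + s) % 2 ≠ (k + s) % 2 ∧
        (1 ≤ s → pt R (k + s - 1) = w) := by
      intro s
      induction s with
      | zero => exact ⟨heqk, hbadk, by omega⟩
      | succ s ihs =>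
        obtain ⟨ih1, ih2, ih3⟩ := ihs
        set t := k + s with htdef
        have ht1 : 1 ≤ t := by omega
        have hnct : pt R (t - 1) = pt R t := hA t ht1 (by rw [ih1]; exact ih2)
        obtain ⟨hS, hw⟩ := hB t ht1 ih1 hnct
        have hptRt : pt R t = w := by
          rcases Nat.eq_zero_or_pos s with rfl | hs
          · have h0 : t = k := by omega
            simp only [h0, hwdef]
          · have := ih3 hs
            omega
        refine ⟨by rw [show k + (s+1) = t + 1 by omega]; exact hS, ?_, ?_⟩
        · rw [show k + (s+1) = t + 1 by omega]
          have : U (t + 1) = U t + w := by omega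
          omega
        · intro _
          rw [show k + (s + 1) - 1 = t by omega]
          exact hptRt
    -- contradiction: pt R (k + R.length) = w > 0 but beyond length
    obtain ⟨_, _, h3⟩ := key (R.length + 1)
    have := h3 (by omega)
    have hzero : pt R (k + (R.length + 1) - 1) = 0 := pt_eq_zero R (by omega)
    omega

end BVAux
namespace BVAux
open List Finset

lemma pt_map_range (f : ℕ → ℕ) (n t : ℕ) :
    pt ((List.range n).map f) t = if t < n then f t else 0 := by
  by_cases h : t < n
  · rw [if_pos h, pt, List.getD_eq_getElem _ _ (by simpa using h)]
    simp
  · rw [if_neg h, pt_eq_zero]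
    simpa using h

/-- Surgery: from a non-type-D partition `L` produce `L₁` strictly below it with
all the data of the first defect. -/
lemma surgery (L : List ℕ) (hLd : Desc L) (hLp : ∀ x ∈ L, 0 < x) (hnT : ¬ TD L) :
    ∃ (L₁ : List ℕ) (i j : ℕ), Desc L₁ ∧ (∀ x ∈ L₁, 0 < x) ∧ 1 ≤ i ∧ i < j ∧
      i ≤ L.length ∧ j ≤ L.length + 1 ∧
      (∀ k, pS L₁ k + (if i ≤ k ∧ k < j then 1 else 0) = pS L k) ∧
      (∀ k, i ≤ k → k < j → pS L k % 2 ≠ k % 2) ∧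
      (∀ k, i < k → k < j → pt L (k - 1) + 1 = pt L (i - 1)) ∧
      2 ≤ pt L (i - 1) ∧ Even (pt L (i - 1)) ∧ pt L (j - 1) + 2 ≤ pt L (i - 1) := by
  -- find first bad corner
  have hex : ∃ t, pt L t ≠ pt L (t + 1) ∧ pS L (t + 1) % 2 ≠ (t + 1) % 2 := by
    by_contra hno
    push_neg at hno
    exact hnT (corner_parity_TD L.length L le_rfl hLd hLp (fun k hk => by
      by_cases hp2 : pS L (k + 1) % 2 = (k + 1) % 2
      · exact hp2
      · exact absurd hp2 (by have := hno k hk; simpa using this)))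
  classical
  obtain ⟨k0, ⟨hcor, hbad⟩, hmin⟩ :
      ∃ t, (pt L t ≠ pt L (t + 1) ∧ pS L (t + 1) % 2 ≠ (t + 1) % 2) ∧
        ∀ s, s < t → ¬(pt L s ≠ pt L (s + 1) ∧ pS L (s + 1) % 2 ≠ (s + 1) % 2) :=
    ⟨Nat.find hex, Nat.find_spec hex, fun s hs => Nat.find_min hex hs⟩
  obtain ⟨i, hidef⟩ : ∃ i, i = k0 + 1 := ⟨_, rfl⟩
  have hieq : i - 1 = k0 := by omega
  obtain ⟨v, hvdef⟩ : ∃ v, v = pt L k0 := ⟨_, rfl⟩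
  have hbadi : pS L i % 2 ≠ i % 2 := by rw [hidef]; exact hbad
  have hveven : Even v := by
    rw [hvdef]
    apply first_bad_corner_even L.length L le_rfl hLd hLp k0 hcor hbad
    intro t ht htc
    by_cases hp2 : pS L (t + 1) % 2 = (t + 1) % 2
    · exact hp2
    · exact absurd ⟨htc, hp2⟩ (hmin t ht)
  have hcori : pt L i < v := by
    have h5 := hLd k0
    have h6 : pt L i = pt L (k0 + 1) := by rw [hidef]
    rw [hvdef]
    omega
  have hvpos : 0 < v := by omega
  have hv2 : 2 ≤ v := by
    rcases hveven with ⟨w, hw⟩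
    omega
  have hilen : i ≤ L.length := by
    by_contra hcon
    have h7 : pt L k0 = 0 := pt_eq_zero L (by omega)
    omega
  -- find j
  have hexj : ∃ j', i < j' ∧ pt L (j' - 1) + 2 ≤ v := by
    refine ⟨L.length + 1, by omega, ?_⟩
    rw [pt_eq_zero L (by omega)]
    omega
  obtain ⟨j, ⟨hij, hjlt⟩, hjmin⟩ :
      ∃ j', (i < j' ∧ pt L (j' - 1) + 2 ≤ v) ∧
        ∀ t, t < j' → ¬(i < t ∧ pt L (t - 1) + 2 ≤ v) :=
    ⟨Nat.find hexj, Nat.find_spec hexj, fun t ht => Nat.find_min hexj ht⟩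
  have hjlen : j ≤ L.length + 1 := by
    by_contra hcon
    exact hjmin (L.length + 1) (by omega) ⟨by omega, by rw [pt_eq_zero L (by omega)]; omega⟩
  have hmid : ∀ k, i < k → k < j → pt L (k - 1) + 1 = v := by
    intro k hik hkj
    have h1 := hjmin k hkj
    have h2 : ¬ (pt L (k - 1) + 2 ≤ v) := fun hc => h1 ⟨hik, hc⟩
    have h3 : pt L (k - 1) ≤ pt L i := hLd.pt_anti (by omega)
    omega
  have hbadmid : ∀ k, i ≤ k → k < j → pS L k % 2 ≠ k % 2 := by
    have haux : ∀ t, i + t < j → pS L (i + t) % 2 ≠ (i + t) % 2 := by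
      intro t
      induction t with
      | zero =>
        intro _
        simpa using hbadi
      | succ t iht =>
        intro hlt
        have h1 := iht (by omega)
        have h2 : pS L (i + t + 1) = pS L (i + t) + pt L (i + t) := pS_succ L (i + t)
        have h3 : pt L (i + t) + 1 = v := by
          have h4 := hmid (i + t + 1) (by omega) hlt
          simpa using h4
        have hv0 : v % 2 = 0 := Nat.even_iff.1 hveven
        rw [show i + (t + 1) = i + t + 1 by ring]
        omega
    intro k hik hkj
    have h9 := haux (k - i) (by omega)
    rw [show i + (k - i) = k by omega] at h9
    exact h9
  -- build L₁
  set l := L.length with hldef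
  set l₁ := if j = l + 1 then l + 1 else l with hl₁def
  set f : ℕ → ℕ := fun t => if t + 1 = i then v - 1 else if t + 1 = j then pt L t + 1 else pt L t
    with hfdef
  set L₁ := (List.range l₁).map f with hL₁def
  have hl₁l : l ≤ l₁ ∧ l₁ ≤ l + 1 := by
    rw [hl₁def]
    split <;> omega
  have hjl₁ : j ≤ l₁ := by
    rw [hl₁def]
    split <;> omega
  have hpt1 : ∀ t, pt L₁ t = f t := by
    intro t
    rw [hL₁def, pt_map_range]
    by_cases h : t < l₁
    · rw [if_pos h]
    · rw [if_neg h]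
      simp only [hfdef]
      have h1 : ¬ (t + 1 = i) := by omega
      have h2 : ¬ (t + 1 = j) := by omega
      rw [if_neg h1, if_neg h2, pt_eq_zero L (by omega)]
  -- pS property
  have hp1 : ∀ k, pS L₁ k + (if i ≤ k ∧ k < j then 1 else 0) = pS L k := by
    intro k
    induction k with
    | zero =>
      rw [pS_zero, pS_zero, if_neg (by omega)]
    | succ k ihk =>
      rw [pS_succ, pS_succ, hpt1 k]
      simp only [hfdef]
      by_cases h1 : k + 1 = i
      · have hvk : pt L k = v := by
          rw [hvdef]
          congr 1
          omega
        simp only [if_pos h1]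
        rw [if_pos (show i ≤ k + 1 ∧ k + 1 < j by omega)]
        rw [if_neg (show ¬(i ≤ k ∧ k < j) by omega)] at ihk
        omega
      · by_cases h2 : k + 1 = j
        · simp only [if_neg h1, if_pos h2]
          rw [if_neg (show ¬(i ≤ k + 1 ∧ k + 1 < j) by omega)]
          rw [if_pos (show i ≤ k ∧ k < j by omega)] at ihk
          omega
        · simp only [if_neg h1, if_neg h2]
          by_cases h3 : i ≤ k ∧ k < j
          · rw [if_pos (show i ≤ k + 1 ∧ k + 1 < j by omega)]
            rw [if_pos h3] at ihk
            omega
          · rw [if_neg (show ¬(i ≤ k + 1 ∧ k + 1 < j) by omega)]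
            rw [if_neg h3] at ihk
            omega
  -- descending
  have hdesc : Desc L₁ := by
    intro t
    rw [hpt1, hpt1]
    simp only [hfdef]
    have pa : pt L (t + 1) ≤ pt L t := hLd t
    by_cases h1 : t + 1 = i
    · simp only [if_neg (show ¬(t + 1 + 1 = i) by omega), if_pos h1]
      by_cases h2 : t + 1 + 1 = j
      · simp only [if_pos h2]
        have : pt L (t + 1) = pt L (j - 1) := by congr 1; omega
        omega
      · simp only [if_neg h2]
        have hlt2 : t + 1 + 1 < j ∨ j < t + 1 + 1 := by omega
        rcases hlt2 with hlt2 | hlt2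
        · have := hmid (t + 2) (by omega) (by omega)
          have he : pt L (t + 2 - 1) = pt L (t + 1) := by congr 1
          omega
        · omega
    · by_cases h2 : t + 1 = j
      · simp only [if_pos h2, if_neg (show ¬(t + 1 + 1 = i) by omega),
          if_neg (show ¬(t + 1 + 1 = j) by omega), if_neg h1]
        omega
      · by_cases h3 : t + 1 + 1 = i
        · simp only [if_pos h3, if_neg h1, if_neg h2]
          have hvk : pt L (t + 1) = v := by
            rw [hvdef]
            congr 1
            omega
          omega
        · by_cases h4 : t + 1 + 1 = j
          · simp only [if_pos h4, if_neg h1, if_neg h2, if_neg h3]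
            have h5 : i < t + 1 := by omega
            have h6 := hmid (t + 1) h5 (by omega)
            have h7 : pt L (t + 1 - 1) = pt L t := by congr 1
            have h8 : pt L (t + 1) = pt L (j - 1) := by congr 1; omega
            omega
          · simp only [if_neg h1, if_neg h2, if_neg h3, if_neg h4]
            exact pa
  -- positivity
  have hpos1 : ∀ x ∈ L₁, 0 < x := by
    intro x hx
    rw [hL₁def] at hx
    obtain ⟨t, ht, rfl⟩ := List.mem_map.1 hx
    rw [List.mem_range] at ht
    simp only [hfdef]
    by_cases h1 : t + 1 = i
    · simp only [if_pos h1]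
      omega
    · by_cases h2 : t + 1 = j
      · simp only [if_neg h1, if_pos h2]
        omega
      · simp only [if_neg h1, if_neg h2]
        apply pt_pos L hLp
        by_cases hj1 : j = l + 1
        · rw [hl₁def, if_pos hj1] at ht
          have : t ≠ l := by omega
          omega
        · rw [hl₁def, if_neg hj1] at ht
          omega
  have hptiv : pt L (i - 1) = v := by
    rw [hieq, hvdef]
  refine ⟨L₁, i, j, hdesc, hpos1, by omega, hij, hilen, hjlen, hp1, hbadmid, ?_, ?_, ?_, ?_⟩
  · intro k hk1 hk2
    rw [hptiv]
    exact hmid k hk1 hk2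
  · rw [hptiv]; exact hv2
  · rw [hptiv]; exact hveven
  · rw [hptiv]; exact hjlt

end BVAux
namespace BVAux
open List Finset

lemma count_sortedD (q : Multiset ℕ) (x : ℕ) : (sortedD q).count x = q.count x := by
  rw [← Multiset.coe_count, sortedD_coe_multiset]

lemma ofTypeD_iff (q : Multiset ℕ) : OfType .D q ↔ TD (sortedD q) := by
  constructor
  · intro h x hx
    rw [count_sortedD]
    exact h x hx
  · intro h x hx
    have := h x hx
    rw [count_sortedD] at this
    exact this

lemma dom_antisymm {x y : Multiset ℕ} (hx : ∀ a ∈ x, 0 < a) (hy : ∀ a ∈ y, 0 < a)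
    (h1 : Dom x y) (h2 : Dom y x) : x = y := by
  rw [dom_iff] at h1 h2
  have hS : ∀ k, pS (sortedD x) k = pS (sortedD y) k := fun k => le_antisymm (h2 k) (h1 k)
  have hpt : ∀ t, pt (sortedD x) t = pt (sortedD y) t := by
    intro t
    have ha := pS_succ (sortedD x) t
    have hb := pS_succ (sortedD y) t
    have h3 := hS t
    have h4 := hS (t + 1)
    omega
  have heq := eq_of_pt (fun a ha => hx a (sortedD_mem.1 ha))
    (fun a ha => hy a (sortedD_mem.1 ha)) hpt
  calc x = ↑(sortedD x) := (sortedD_coe_multiset x).symm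
  _ = ↑(sortedD y) := by rw [heq]
  _ = y := sortedD_coe_multiset y

/-- Master lemma: existence of the D-collapse together with the rectangle-shift
maximality property. -/
lemma master : ∀ (n : ℕ) (g : Multiset ℕ),
    (∑ k ∈ Finset.range (g.sum + 1), pS (sortedD g) k) = n →
    (∀ x ∈ g, 0 < x) →
    ∃ c : Multiset ℕ, IsCollapse .D g c ∧
      ∀ (dd bb : ℕ) (r : Multiset ℕ), (∀ x ∈ r, 0 < x) → OfType .D r →
        (∀ k, pS (sortedD r) k ≤ pS (sortedD g) k + 2 * dd * min k bb) →
        ∀ k, pS (sortedD r) k ≤ pS (sortedD c) k + 2 * dd * min k bb := by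
  intro n
  induction n using Nat.strong_induction_on with
  | _ n ih =>
    intro g hn hpos
    by_cases hTD : TD (sortedD g)
    · exact ⟨g, ⟨⟨hpos, rfl⟩, (ofTypeD_iff g).2 hTD, fun k => le_refl _, fun r _ _ hd => hd⟩,
        fun dd bb r _ _ h => h⟩
    · obtain ⟨L₁, i, j, h1d, h1p, hi1, hij, hilen, hjlen, hp1, hbadmid, hmid, hiv, hveven, hjlt⟩ :=
        surgery (sortedD g) (sortedD_desc g) (fun x hx => hpos x (sortedD_mem.1 hx)) hTD
      have h1pm : ∀ x ∈ (↑L₁ : Multiset ℕ), 0 < x := by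
        intro x hx
        exact h1p x (by exact_mod_cast hx)
      have hs₁ : sortedD (↑L₁ : Multiset ℕ) = L₁ := sortedD_of_sorted ((desc_iff_sorted L₁).1 h1d)
      have hp1le : ∀ k, pS L₁ k ≤ pS (sortedD g) k := by
        intro k
        have := hp1 k
        by_cases hk : i ≤ k ∧ k < j
        · rw [if_pos hk] at this; omega
        · rw [if_neg hk] at this; omega
      have hsum₁ : (↑L₁ : Multiset ℕ).sum = g.sum := by
        have e1 : pS L₁ (L₁.length + (sortedD g).length + j) = L₁.sum :=
          pS_eq_sum _ (by omega)
        have e2 : pS (sortedD g) (L₁.length + (sortedD g).length + j) = (sortedD g).sum :=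
          pS_eq_sum _ (by omega)
        have e3 := hp1 (L₁.length + (sortedD g).length + j)
        rw [if_neg (by omega)] at e3
        have e4 : (↑L₁ : Multiset ℕ).sum = L₁.sum := by simp
        rw [e4, ← sortedD_sum g]
        omega
      -- measure decrease
      have hmeas : (∑ k ∈ Finset.range ((↑L₁ : Multiset ℕ).sum + 1), pS (sortedD ↑L₁) k) < n := by
        rw [hsum₁, hs₁, ← hn]
        apply Finset.sum_lt_sum
        · intro k _
          exact hp1le k
        · refine ⟨i, Finset.mem_range.2 ?_, ?_⟩
          · have := len_le_sum (sortedD g) (fun x hx => hpos x (sortedD_mem.1 hx))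
            rw [sortedD_sum] at this
            omega
          · have := hp1 i
            rw [if_pos ⟨le_refl i, hij⟩] at this
            omega
      obtain ⟨c, ⟨⟨hcpos, hcsum⟩, hcD, hcdom, hcmax⟩, hcrux⟩ :=
        ih _ hmeas (↑L₁ : Multiset ℕ) rfl h1pm
      -- step transfer
      have hstep : ∀ (dd bb : ℕ) (r : Multiset ℕ), (∀ x ∈ r, 0 < x) → OfType .D r →
          (∀ k, pS (sortedD r) k ≤ pS (sortedD g) k + 2 * dd * min k bb) →
          ∀ k, pS (sortedD r) k ≤ pS L₁ k + 2 * dd * min k bb := by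
        intro dd bb r hrp hrD hr k
        by_cases hk : i ≤ k ∧ k < j
        · have hsb := step_bound (sortedD g) (sortedD_desc g) i j dd bb hi1 hij hbadmid hmid hiv
            hveven hjlt (sortedD r) (sortedD_desc r) (fun x hx => hrp x (sortedD_mem.1 hx))
            ((ofTypeD_iff r).1 hrD) hr k hk.1 hk.2
          have h2 := hp1 k
          rw [if_pos hk] at h2
          omega
        · have h2 := hp1 k
          rw [if_neg hk] at h2
          have h3 := hr k
          omega
      refine ⟨c, ⟨⟨hcpos, by rw [hcsum, hsum₁]⟩, hcD, ?_, ?_⟩, ?_⟩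
      · -- Dom g c
        rw [dom_iff]
        intro k
        have h4 := (dom_iff _ _).1 hcdom k
        rw [hs₁] at h4
        exact le_trans h4 (hp1le k)
      · -- maximality
        intro r hrP hrD hrdom
        have hr0 : ∀ k, pS (sortedD r) k ≤ pS L₁ k := by
          intro k
          have h5 := hstep 0 0 r hrP.1 hrD (fun k' => by
            have h6 := (dom_iff g r).1 hrdom k'
            simpa using h6) k
          simpa using h5
        exact hcmax r ⟨hrP.1, by rw [hrP.2, hsum₁]⟩ hrD
          ((dom_iff _ r).2 (by rw [hs₁]; exact hr0))
      · -- crux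
        intro dd bb r hrp hrD hr k
        exact hcrux dd bb r hrp hrD (fun k' => by rw [hs₁]; exact hstep dd bb r hrp hrD hr k') k

end BVAux
namespace BVAux
open List Finset

/-! ### transpose and cwAdd machinery -/

/-- number of parts of `p` that are `≥ i`. -/
def cnt (p : Multiset ℕ) (i : ℕ) : ℕ := Multiset.card (p.filter fun x => i ≤ x)

lemma transposeP_eq (p : Multiset ℕ) :
    transposeP p = ↑((List.range (maxPart p)).map fun i => cnt p (i + 1)) := rfl

lemma cnt_anti (p : Multiset ℕ) {i j : ℕ} (hij : i ≤ j) : cnt p j ≤ cnt p i :=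
  Multiset.card_le_card (Multiset.monotone_filter_right p (fun b hb => le_trans hij hb))

lemma cnt_add (q p : Multiset ℕ) (i : ℕ) : cnt (q + p) i = cnt q i + cnt p i := by
  rw [cnt, Multiset.filter_add, Multiset.card_add]
  rfl

lemma cnt_pos {p : Multiset ℕ} {x i : ℕ} (hx : x ∈ p) (hi : i ≤ x) : 0 < cnt p i := by
  rw [cnt, Multiset.card_pos_iff_exists_mem]
  exact ⟨x, Multiset.mem_filter.2 ⟨hx, hi⟩⟩

lemma cnt_eq_zero {p : Multiset ℕ} {i : ℕ} (h : ∀ x ∈ p, x < i) : cnt p i = 0 := by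
  rw [cnt, Multiset.card_eq_zero, Multiset.filter_eq_nil]
  intro x hx
  exact not_le.2 (h x hx)

lemma cnt_replicate (m v i : ℕ) : cnt (Multiset.replicate m v) i = if i ≤ v then m else 0 := by
  rw [cnt]
  by_cases h : i ≤ v
  · rw [if_pos h, Multiset.filter_eq_self.2 (fun x hx => by
      rw [Multiset.eq_of_mem_replicate hx]; exact h)]
    simp
  · rw [if_neg h, Multiset.card_eq_zero, Multiset.filter_eq_nil]
    intro x hx
    rw [Multiset.eq_of_mem_replicate hx]
    exact h

lemma pt_zero_headI (L : List ℕ) : pt L 0 = L.headI := by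
  cases L <;> simp [pt]

lemma maxPart_le {p : Multiset ℕ} {x : ℕ} (hx : x ∈ p) : x ≤ maxPart p := by
  rw [maxPart, ← pt_zero_headI]
  exact desc_le_head (sortedD_desc p) (sortedD_mem.2 hx)

lemma maxPart_mem {p : Multiset ℕ} (hp : p ≠ 0) : maxPart p ∈ p := by
  rw [maxPart]
  have hne : sortedD p ≠ [] := by
    intro h
    apply hp
    rw [← sortedD_coe_multiset p, h]
    rfl
  apply sortedD_mem.1
  cases hL : sortedD p with
  | nil => exact absurd hL hne
  | cons a t => simp

/-- the sorted list of the transpose -/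
lemma sortedD_transposeP (p : Multiset ℕ) :
    sortedD (transposeP p) = (List.range (maxPart p)).map fun i => cnt p (i + 1) := by
  rw [transposeP_eq]
  apply sortedD_of_sorted
  apply (desc_iff_sorted _).1
  intro t
  rw [pt_map_range, pt_map_range]
  by_cases h1 : t + 1 < maxPart p
  · rw [if_pos h1, if_pos (by omega)]
    exact cnt_anti p (by omega)
  · rw [if_neg h1]
    exact Nat.zero_le _

lemma transposeP_pos {p : Multiset ℕ} (hp : p ≠ 0) :
    ∀ x ∈ transposeP p, 0 < x := by
  intro x hx
  rw [transposeP_eq] at hx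
  obtain ⟨i, hi, rfl⟩ := List.mem_map.1 (by exact_mod_cast hx)
  rw [List.mem_range] at hi
  exact cnt_pos (maxPart_mem hp) (by omega)

lemma ind_sum (a K : ℕ) (h : a ≤ K) :
    (∑ i ∈ Finset.range K, if i + 1 ≤ a then (1 : ℕ) else 0) = a := by
  rw [Finset.sum_boole]
  have : (Finset.range K).filter (fun i => i + 1 ≤ a) = Finset.range a := by
    ext i
    simp only [Finset.mem_filter, Finset.mem_range]
    omega
  rw [this, Finset.card_range]
  simp

lemma sum_cnt (p : Multiset ℕ) : ∀ K, (∀ x ∈ p, x ≤ K) →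
    (∑ i ∈ Finset.range K, cnt p (i + 1)) = p.sum := by
  induction p using Multiset.induction with
  | empty =>
    intro K _
    have h0 : ∀ i : ℕ, cnt (0 : Multiset ℕ) (i + 1) = 0 :=
      fun i => cnt_eq_zero (fun x hx => absurd hx (by simp))
    simp [h0]
  | cons a p ihp =>
    intro K hK
    have hcons : ∀ i, cnt (a ::ₘ p) (i + 1) = (if i + 1 ≤ a then 1 else 0) + cnt p (i + 1) := by
      intro i
      rw [cnt, Multiset.filter_cons]
      rw [Multiset.card_add]
      congr 1
      by_cases h : i + 1 ≤ a <;> simp [h]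
    simp only [hcons]
    rw [Finset.sum_add_distrib, ind_sum a K (hK a (by simp)),
      ihp K (fun x hx => hK x (by simp [hx]))]
    simp

lemma list_range_map_sum (f : ℕ → ℕ) : ∀ n, ((List.range n).map f).sum = ∑ i ∈ Finset.range n, f i := by
  intro n
  induction n with
  | zero => simp
  | succ n ihn =>
    rw [List.range_succ, List.map_append, List.sum_append, Finset.sum_range_succ, ihn]
    simp

lemma transposeP_sum (p : Multiset ℕ) : (transposeP p).sum = p.sum := by
  rw [transposeP_eq, Multiset.sum_coe, list_range_map_sum]
  exact sum_cnt p (maxPart p) (fun x hx => maxPart_le hx)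

/-! addLists lemmas -/

lemma pt_addLists : ∀ (l m : List ℕ) (t : ℕ), pt (addLists l m) t = pt l t + pt m t := by
  intro l
  induction l with
  | nil => intro m t; rw [addLists]; simp [pt_nil]
  | cons a l ihl =>
    intro m t
    cases m with
    | nil =>
      rw [addLists]
      simp [pt_nil]
    | cons b m =>
      rw [addLists]
      cases t with
      | zero => simp [pt]
      | succ t => simp only [pt, List.getD_cons_succ]; exact ihl m t

lemma len_addLists : ∀ (l m : List ℕ), (addLists l m).length = max l.length m.length := by
  intro l
  induction l with
  | nil => intro m; rw [addLists]; simp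
  | cons a l ihl =>
    intro m
    cases m with
    | nil => rw [addLists]; simp
    | cons b m =>
      rw [addLists]
      simp only [List.length_cons, ihl m]
      omega

lemma desc_addLists {l m : List ℕ} (hl : Desc l) (hm : Desc m) : Desc (addLists l m) := by
  intro t
  rw [pt_addLists, pt_addLists]
  exact Nat.add_le_add (hl t) (hm t)

lemma pos_addLists {l m : List ℕ} (hl : ∀ x ∈ l, 0 < x) (hm : ∀ x ∈ m, 0 < x) :
    ∀ x ∈ addLists l m, 0 < x := by
  intro x hx
  obtain ⟨t, ht, rfl⟩ := List.mem_iff_getElem.1 hx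
  rw [← List.getD_eq_getElem _ 0 ht]
  have ht' : t < max l.length m.length := by rw [← len_addLists]; exact ht
  show 0 < pt (addLists l m) t
  rw [pt_addLists]
  rcases Nat.lt_or_ge t l.length with h | h
  · have := pt_pos l hl h
    omega
  · have h2 : t < m.length := by
      rcases lt_max_iff.1 ht' with h3 | h3
      · omega
      · exact h3
    have := pt_pos m hm h2
    omega

lemma pS_addLists (l m : List ℕ) (k : ℕ) : pS (addLists l m) k = pS l k + pS m k := by
  simp only [pS, pt_addLists]
  rw [Finset.sum_add_distrib]

lemma pt_replicate (b v t : ℕ) : pt (List.replicate b v) t = if t < b then v else 0 := by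
  by_cases h : t < b
  · rw [if_pos h, pt, List.getD_eq_getElem _ _ (by simpa using h), List.getElem_replicate]
  · rw [if_neg h, pt_eq_zero _ (by simpa using h)]

lemma desc_replicate (b v : ℕ) : Desc (List.replicate b v) := by
  intro t
  rw [pt_replicate, pt_replicate]
  by_cases h : t + 1 < b
  · rw [if_pos h, if_pos (by omega)]
  · rw [if_neg h]
    exact Nat.zero_le _

lemma pS_replicate (b v : ℕ) : ∀ k, pS (List.replicate b v) k = v * min k b := by
  intro k
  induction k with
  | zero => simp [pS_zero]
  | succ k ihk =>
    rw [pS_succ, ihk, pt_replicate]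
    by_cases h : k < b
    · rw [if_pos h, min_eq_left (by omega), min_eq_left (by omega)]
      ring
    · rw [if_neg h, min_eq_right (by omega), min_eq_right (by omega)]
      omega

lemma sortedD_rect (b v : ℕ) : sortedD (rect v b) = List.replicate b v := by
  rw [rect, ← Multiset.coe_replicate]
  exact sortedD_of_sorted ((desc_iff_sorted _).1 (desc_replicate b v))

end BVAux
namespace BVAux
open List Finset

lemma key_identity (b d : ℕ) (hb : 0 < b) (hd : 0 < d) (p : Multiset ℕ) (hp0 : p ≠ 0) :
    transposeP (rect b (2 * d) + p) = cwAdd (rect (2 * d) b) (transposeP p) := by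
  have hW : rect b (2 * d) = Multiset.replicate (2 * d) b := rfl
  have hWp0 : rect b (2 * d) + p ≠ 0 := by
    intro h
    apply hp0
    have := congrArg Multiset.card h
    simp at this
    exact this.2
  -- maxPart of the union
  have hmax : maxPart (rect b (2 * d) + p) = max b (maxPart p) := by
    apply _root_.le_antisymm
    · have hmem := maxPart_mem hWp0
      rw [Multiset.mem_add] at hmem
      rcases hmem with hmem | hmem
      · exact le_max_of_le_left (le_of_eq (Multiset.eq_of_mem_replicate
          (by rw [hW] at hmem; exact hmem)))
      · exact le_max_of_le_right (maxPart_le hmem)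
    · apply max_le
      · apply maxPart_le
        rw [Multiset.mem_add, hW]
        exact Or.inl (Multiset.mem_replicate.2 ⟨by omega, rfl⟩)
      · apply maxPart_le
        rw [Multiset.mem_add]
        exact Or.inr (maxPart_mem hp0)
  have hcntW : ∀ t : ℕ, cnt (rect b (2 * d)) (t + 1) = if t < b then 2 * d else 0 := by
    intro t
    rw [hW, cnt_replicate]
    by_cases h : t < b
    · rw [if_pos (by omega), if_pos h]
    · rw [if_neg (by omega), if_neg h]
  -- the two lists
  rw [transposeP_eq, cwAdd, sortedD_rect, sortedD_transposeP]
  congr 1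
  apply eq_of_pt
  · intro x hx
    obtain ⟨i, hi, rfl⟩ := List.mem_map.1 hx
    rw [List.mem_range] at hi
    apply cnt_pos (maxPart_mem hWp0)
    omega
  · apply pos_addLists
    · intro y hy
      rw [List.eq_of_mem_replicate hy]
      omega
    · intro y hy
      obtain ⟨i, hi, rfl⟩ := List.mem_map.1 hy
      rw [List.mem_range] at hi
      exact cnt_pos (maxPart_mem hp0) (by omega)
  · intro t
    rw [pt_map_range, pt_addLists, pt_map_range, pt_replicate, hmax]
    have hsplit : cnt (rect b (2 * d) + p) (t + 1)
        = (if t < b then 2 * d else 0) + cnt p (t + 1) := by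
      rw [cnt_add, hcntW]
    by_cases h1 : t < max b (maxPart p)
    · rw [if_pos h1, hsplit]
      by_cases h2 : t < maxPart p
      · rw [if_pos h2]
      · rw [if_neg h2, cnt_eq_zero (fun x hx => by
          have := maxPart_le hx
          omega)]
    · rw [if_neg h1, if_neg (by omega), if_neg (by omega)]

lemma collapse_eq {X : PType} {s q : Multiset ℕ} (h : IsCollapse X s q) : collapse X s = q := by
  classical
  have hex : ∃ q', IsCollapse X s q' := ⟨q, h⟩
  rw [collapse]
  rw [dif_pos hex]
  obtain ⟨hP, hD, hdom, hmax⟩ := hex.choose_spec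
  obtain ⟨hP', hD', hdom', hmax'⟩ := h
  exact dom_antisymm hP.1 hP'.1 (hmax q hP' hD' hdom') (hmax' _ hP hD hdom)

lemma cwAdd_rect_sum (v bb : ℕ) (q : Multiset ℕ) :
    (cwAdd (rect v bb) q).sum = v * bb + q.sum := by
  rw [cwAdd, sortedD_rect, Multiset.sum_coe]
  have hlen := len_addLists (List.replicate bb v) (sortedD q)
  simp only [List.length_replicate] at hlen
  have h1 : (addLists (List.replicate bb v) (sortedD q)).sum
      = pS (addLists (List.replicate bb v) (sortedD q))
        (addLists (List.replicate bb v) (sortedD q)).length :=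
    (pS_eq_sum _ (le_refl _)).symm
  rw [h1, pS_addLists, pS_replicate, pS_eq_sum _ (by omega), sortedD_sum,
    min_eq_right (by omega)]

lemma sortedD_cwAdd_rect (v bb : ℕ) (q : Multiset ℕ) :
    sortedD (cwAdd (rect v bb) q) = addLists (List.replicate bb v) (sortedD q) := by
  rw [cwAdd, sortedD_rect]
  exact sortedD_of_sorted ((desc_iff_sorted _).1
    (desc_addLists (desc_replicate _ _) (sortedD_desc q)))

lemma cwAdd_rect_pos (v bb : ℕ) (hv : 0 < v) (q : Multiset ℕ) (hq : ∀ x ∈ q, 0 < x) :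
    ∀ x ∈ cwAdd (rect v bb) q, 0 < x := by
  intro x hx
  rw [cwAdd, sortedD_rect] at hx
  exact pos_addLists (l := List.replicate bb v) (m := sortedD q)
    (fun y hy => by rw [List.eq_of_mem_replicate hy]; omega)
    (fun y hy => hq y (sortedD_mem.1 hy)) x (by exact_mod_cast hx)

lemma pS_cwAdd_rect (v bb : ℕ) (q : Multiset ℕ) (k : ℕ) :
    pS (sortedD (cwAdd (rect v bb) q)) k = pS (sortedD q) k + v * min k bb := by
  rw [sortedD_cwAdd_rect, pS_addLists, pS_replicate]
  omega

end BVAux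


/-- For positive integers `b, d, n` and a partition `p` of `2n`
of type `D`, one has `d_BV([b^{2d}] ⊔ p) = ([(2d)^b] + d_BV(p))_D`, i.e.
`(([b^{2d}] ⊔ p)^*)_D = ([(2d)^b] + (p^*)_D)_D`. -/
theorem dBV_union_rect_typeD (b d n : ℕ) (hb : 0 < b) (hd : 0 < d) (hn : 0 < n)
    (p : Multiset ℕ) (hp : IsPartitionOf p (2 * n)) (hpD : OfType .D p) :
    collapse .D (transposeP (rect b (2 * d) + p)) =
      collapse .D (cwAdd (rect (2 * d) b) (collapse .D (transposeP p))) := by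
  classical
  open BVAux in
  obtain ⟨hpp, hps⟩ := hp
  have hp0 : p ≠ 0 := by
    intro h
    rw [h] at hps
    simp at hps
    omega
  have hgpos : ∀ x ∈ transposeP p, 0 < x := transposeP_pos hp0
  obtain ⟨c, hcol, hcrux⟩ := master _ (transposeP p) rfl hgpos
  obtain ⟨⟨hcp, hcs⟩, hcD, hcdom, hcmax⟩ := hcol
  have hcval : collapse .D (transposeP p) = c :=
    collapse_eq ⟨⟨hcp, hcs⟩, hcD, hcdom, hcmax⟩
  have hkey : transposeP (rect b (2 * d) + p) = cwAdd (rect (2 * d) b) (transposeP p) :=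
    key_identity b d hb hd p hp0
  have hRgpos : ∀ x ∈ cwAdd (rect (2 * d) b) (transposeP p), 0 < x :=
    cwAdd_rect_pos _ _ (by omega) _ hgpos
  obtain ⟨m₀, hm₀, hm₀crux⟩ := master _ (cwAdd (rect (2 * d) b) (transposeP p)) rfl hRgpos
  obtain ⟨⟨hm₀p, hm₀s⟩, hm₀D, hm₀dom, hm₀max⟩ := hm₀
  -- pS formulas
  have hpSRg : ∀ k, pS (sortedD (cwAdd (rect (2 * d) b) (transposeP p))) k
      = pS (sortedD (transposeP p)) k + 2 * d * min k b := fun k => pS_cwAdd_rect _ _ _ k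
  have hpSRc : ∀ k, pS (sortedD (cwAdd (rect (2 * d) b) c)) k
      = pS (sortedD c) k + 2 * d * min k b := fun k => pS_cwAdd_rect _ _ _ k
  have hcle : ∀ k, pS (sortedD c) k ≤ pS (sortedD (transposeP p)) k := (dom_iff _ _).1 hcdom
  -- m₀ is also the collapse of Rc
  have hm₀Rc : IsCollapse .D (cwAdd (rect (2 * d) b) c) m₀ := by
    refine ⟨⟨hm₀p, ?_⟩, hm₀D, ?_, ?_⟩
    · rw [hm₀s, cwAdd_rect_sum, cwAdd_rect_sum, hcs]
    · -- Dom Rc m₀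
      rw [dom_iff]
      intro k
      rw [hpSRc]
      apply hcrux d b m₀ hm₀p hm₀D
      intro k'
      have h6 := (dom_iff _ _).1 hm₀dom k'
      rw [hpSRg] at h6
      exact h6
    · -- maximality
      intro r hrP hrD hrdom
      apply hm₀max r ⟨hrP.1, by rw [hrP.2, cwAdd_rect_sum, cwAdd_rect_sum, hcs]⟩ hrD
      rw [dom_iff]
      intro k
      have h7 := (dom_iff _ _).1 hrdom k
      rw [hpSRc] at h7
      rw [hpSRg]
      have := hcle k
      omega
  rw [hkey, hcval,
    collapse_eq (⟨⟨hm₀p, hm₀s⟩, hm₀D, hm₀dom, hm₀max⟩ : IsCollapse .D _ m₀),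
    collapse_eq hm₀Rc]
end

section
/- Let X ∈ {B, C, D}, let n be a positive integer (odd if X = B, even if X = C or D), let d be a positive integer, and let p, q be partitions of n of type X. If ([2d] + p)_X ≥ ([2d] + q)_X in the dominance order, then p ≥ q. (Here [2d] + p is the partition obtained from p by adding 2d to its largest part.) -/
open Multiset

namespace StmtAux

lemma sortedD_sorted (p : Multiset ℕ) : (sortedD p).Pairwise (· ≥ ·) := by
  rw [sortedD, List.pairwise_reverse]
  exact List.Pairwise.imp (fun h => h) (Multiset.pairwise_sort p (· ≤ ·))

lemma coe_sortedD (p : Multiset ℕ) : (↑(sortedD p) : Multiset ℕ) = p := by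
  rw [sortedD, Multiset.coe_reverse, Multiset.sort_eq]

lemma sortedD_coe (l : List ℕ) (h : l.Pairwise (· ≥ ·)) : sortedD (↑l) = l := by
  rw [sortedD]
  have hp : (Multiset.sort (↑l : Multiset ℕ) (· ≤ ·)).Perm l.reverse :=
    Multiset.coe_eq_coe.mp (by rw [Multiset.sort_eq, Multiset.coe_reverse])
  have h2 : l.reverse.Pairwise (· ≤ ·) := by
    rw [List.pairwise_reverse]
    exact List.Pairwise.imp (fun h => h) h
  rw [List.Perm.eq_of_pairwise' (Multiset.pairwise_sort _ _) h2 hp, List.reverse_reverse]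

/-- The constrained parity for type `X`. -/
def Con : PType → ℕ → Prop
  | .B, x => Even x
  | .C, x => Odd x
  | .D, x => Even x

lemma ofType_iff (X : PType) (p : Multiset ℕ) :
    OfType X p ↔ ∀ x, Con X x → Even (p.count x) := by
  cases X <;> exact Iff.rfl

lemma con_add_two_mul (X : PType) (a k : ℕ) : Con X (a + 2 * k) ↔ Con X a := by
  cases X <;> simp [Con, Nat.even_add, Nat.odd_add, Nat.even_mul]

lemma con_succ (X : PType) (a : ℕ) : Con X (a + 1) ↔ ¬ Con X a := by
  cases X <;> simp [Con, Nat.even_add_one, Nat.odd_add_one, Nat.not_odd_iff_even,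
    Nat.not_even_iff_odd]

lemma collapse_isCollapse {X : PType} {m : Multiset ℕ} (h : ∃ c, IsCollapse X m c) :
    IsCollapse X m (collapse X m) := by
  rw [collapse]
  exact dif_pos h ▸ h.choose_spec

lemma collapse_of_not_exists {X : PType} {m : Multiset ℕ} (h : ¬ ∃ c, IsCollapse X m c) :
    collapse X m = 0 := by
  rw [collapse]
  exact dif_neg h

end StmtAux
namespace StmtAux

lemma isCollapse_self (X : PType) (m : Multiset ℕ) (hpos : ∀ x ∈ m, 0 < x)
    (hX : OfType X m) : IsCollapse X m m :=
  ⟨⟨hpos, rfl⟩, hX, fun _ => le_rfl, fun _ _ _ hr => hr⟩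

lemma isCollapse_bad (X : PType) (d a : ℕ) (l : List ℕ) (hd : 0 < d) (ha : 0 < a)
    (hsort : (a :: a :: l).Pairwise (· ≥ ·)) (hpos : ∀ x ∈ a :: a :: l, 0 < x)
    (hX : OfType X (↑(a :: a :: l) : Multiset ℕ)) (haX : Con X a) :
    IsCollapse X (↑((2 * d + a) :: a :: l) : Multiset ℕ)
      (↑((2 * d + a - 1) :: (a + 1) :: l) : Multiset ℕ) := by
  have hla : ∀ x ∈ l, x ≤ a := by
    intro x hx
    exact (List.pairwise_cons.mp ((List.pairwise_cons.mp hsort).2)).1 x hx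
  have hlsort : l.Pairwise (· ≥ ·) := (List.pairwise_cons.mp ((List.pairwise_cons.mp hsort).2)).2
  have hs1 : ((2 * d + a) :: a :: l).Pairwise (· ≥ ·) := by
    rw [List.pairwise_cons]
    refine ⟨?_, (List.pairwise_cons.mp hsort).2⟩
    intro b hb
    rcases List.mem_cons.mp hb with rfl | hb
    · omega
    · have := hla b hb; omega
  have hs2 : ((2 * d + a - 1) :: (a + 1) :: l).Pairwise (· ≥ ·) := by
    rw [List.pairwise_cons]
    constructor
    · intro b hb
      rcases List.mem_cons.mp hb with rfl | hb
      · omega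
      · have := hla b hb; omega
    · rw [List.pairwise_cons]
      exact ⟨fun b hb => by have := hla b hb; omega, hlsort⟩
  have hnca1 : ¬ Con X (a + 1) := by rw [con_succ]; exact fun h => h haX
  have hnca2 : ¬ Con X (2 * d + a - 1) := by
    have he : 2 * d + a - 1 = (a + 1) + 2 * (d - 1) := by omega
    rw [he, con_add_two_mul]; exact hnca1
  refine ⟨⟨?_, ?_⟩, ?_, ?_, ?_⟩
  · -- positivity
    intro x hx
    rw [Multiset.mem_coe] at hx
    rcases List.mem_cons.mp hx with rfl | hx
    · omega
    · rcases List.mem_cons.mp hx with rfl | hx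
      · omega
      · exact hpos x (by simp [hx])
  · -- sum
    simp only [Multiset.sum_coe, List.sum_cons]
    omega
  · -- OfType
    rw [ofType_iff]
    intro x hx
    have hx1 : x ≠ 2 * d + a - 1 := fun h => hnca2 (h ▸ hx)
    have hx2 : x ≠ a + 1 := fun h => hnca1 (h ▸ hx)
    have h1 := (ofType_iff X _).mp hX x hx
    rw [Multiset.coe_count] at h1 ⊢
    rw [List.count_cons_of_ne (Ne.symm hx1), List.count_cons_of_ne (Ne.symm hx2)]
    by_cases hxa : x = a
    · subst hxa
      rw [List.count_cons_self, List.count_cons_self] at h1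
      rcases h1 with ⟨t, ht⟩
      exact ⟨t - 1, by omega⟩
    · rwa [List.count_cons_of_ne (Ne.symm hxa), List.count_cons_of_ne (Ne.symm hxa)] at h1
  · -- Dom
    intro k
    rw [sortedD_coe _ hs1, sortedD_coe _ hs2]
    rcases k with _ | k
    · simp
    rcases k with _ | k
    · simp only [List.take_succ_cons, List.take_zero, List.sum_cons, List.sum_nil]
      omega
    · simp only [List.take_succ_cons, List.sum_cons]
      omega
  · -- maximality
    intro r hrpart hrX hdom k
    rw [sortedD_coe _ hs2]
    have hRc := coe_sortedD r
    rcases k with _ | k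
    · simp
    rcases k with _ | k
    · -- k = 1
      have h1 := hdom 1
      rw [sortedD_coe _ hs1] at h1
      rcases hR : sortedD r with _ | ⟨x, R'⟩
      · simp
      rw [hR] at h1
      simp only [List.take_succ_cons, List.take_zero, List.sum_cons, List.sum_nil] at h1 ⊢
      by_cases hxe : x = 2 * d + a
      · exfalso
        subst hxe
        have hmem : (2 * d + a) ∈ r := by
          rw [← hRc, hR]
          exact Multiset.mem_coe.mpr (List.mem_cons_self)
        have hcon : Con X (2 * d + a) := by
          rw [add_comm, con_add_two_mul]; exact haX
        have hev : Even (r.count (2 * d + a)) := (ofType_iff X r).mp hrX _ hcon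
        have h1c : 1 ≤ r.count (2 * d + a) := Multiset.one_le_count_iff_mem.mpr hmem
        have h2c : 2 ≤ r.count (2 * d + a) := by
          rcases hev with ⟨t, ht⟩; omega
        have hcnt : r.count (2 * d + a) = ((2 * d + a) :: R').count (2 * d + a) := by
          rw [← hRc, hR, Multiset.coe_count]
        have hmem' : (2 * d + a) ∈ R' := by
          by_contra hmm
          rw [hcnt, List.count_cons, List.count_eq_zero_of_not_mem hmm] at h2c
          simp at h2c
        rcases R' with _ | ⟨y, R''⟩
        · simp at hmem'
        have hRs := sortedD_sorted r
        rw [hR] at hRs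
        have hy : 2 * d + a ≤ y := by
          have hy1 := (List.pairwise_cons.mp ((List.pairwise_cons.mp hRs).2)).1
          rcases List.mem_cons.mp hmem' with heq | hmem''
          · omega
          · exact hy1 _ hmem''
        have h2 := hdom 2
        rw [sortedD_coe _ hs1, hR] at h2
        simp only [List.take_succ_cons, List.take_zero, List.sum_cons, List.sum_nil] at h2
        omega
      · omega
    · -- k + 2
      have h2 := hdom (k + 1 + 1)
      rw [sortedD_coe _ hs1] at h2
      simp only [List.take_succ_cons, List.sum_cons] at h2 ⊢
      omega

end StmtAux
open StmtAux in
/-- Let `X ∈ {B, C, D}`, `n` a positive integer (odd if `X = B`,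
even if `X = C` or `X = D`), `d` a positive integer, and `p, q` partitions of `n` of
type `X`.  If `([2d] + p)_X ≥ ([2d] + q)_X` in the dominance order, then `p ≥ q`. -/
theorem dom_of_dom_add_collapse (X : PType) (n d : ℕ) (hn : 0 < n) (hd : 0 < d)
    (hB : X = PType.B → Odd n) (hC : X = PType.C → Even n) (hD : X = PType.D → Even n)
    (p q : Multiset ℕ) (hp : IsPartitionOf p n) (hq : IsPartitionOf q n)
    (hpX : OfType X p) (hqX : OfType X q)
    (h : Dom (collapse X (cwAdd (rect (2 * d) 1) p)) (collapse X (cwAdd (rect (2 * d) 1) q))) :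
    Dom p q := by
  classical
  obtain ⟨hppos, hpsum⟩ := hp
  obtain ⟨hqpos, hqsum⟩ := hq
  have hPc := coe_sortedD p
  have hQc := coe_sortedD q
  rcases hP : sortedD p with _ | ⟨p1, pl⟩
  · exfalso
    rw [hP] at hPc
    rw [← hPc] at hpsum
    simp at hpsum
    omega
  rcases hQ : sortedD q with _ | ⟨q1, ql⟩
  · exfalso
    rw [hQ] at hQc
    rw [← hQc] at hqsum
    simp at hqsum
    omega
  rw [hP] at hPc
  rw [hQ] at hQc
  have hPs : (p1 :: pl).Pairwise (· ≥ ·) := hP ▸ sortedD_sorted p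
  have hQs : (q1 :: ql).Pairwise (· ≥ ·) := hQ ▸ sortedD_sorted q
  have hrect : sortedD (rect (2 * d) 1) = [2 * d] := by
    rw [rect, Multiset.replicate_one, ← Multiset.coe_singleton]
    exact sortedD_coe [2 * d] (List.pairwise_singleton _ _)
  have hp' : cwAdd (rect (2 * d) 1) p = ↑((2 * d + p1) :: pl) := by
    rw [cwAdd, hrect, hP]
    simp [addLists]
  have hq' : cwAdd (rect (2 * d) 1) q = ↑((2 * d + q1) :: ql) := by
    rw [cwAdd, hrect, hQ]
    simp [addLists]
  rw [hp', hq'] at h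
  have hp1pos : 0 < p1 := hppos p1 (by rw [← hPc]; simp)
  have hq1pos : 0 < q1 := hqpos q1 (by rw [← hQc]; simp)
  have hpl : ∀ x ∈ pl, x ≤ p1 := (List.pairwise_cons.mp hPs).1
  have hql : ∀ x ∈ ql, x ≤ q1 := (List.pairwise_cons.mp hQs).1
  have hs_p' : ((2 * d + p1) :: pl).Pairwise (· ≥ ·) := by
    rw [List.pairwise_cons]
    exact ⟨fun b hb => by have := hpl b hb; omega, (List.pairwise_cons.mp hPs).2⟩
  -- the main chain of inequalities
  have main : ∀ cq : Multiset ℕ, IsCollapse X (↑((2 * d + q1) :: ql)) cq →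
      ∀ k, ((sortedD cq).take k).sum ≤ (((2 * d + p1) :: pl).take k).sum := by
    intro cq hcq
    have hEq : ∃ c, IsCollapse X (↑((2 * d + q1) :: ql) : Multiset ℕ) c := ⟨cq, hcq⟩
    have hwq := collapse_isCollapse hEq
    have LB := hwq.2.2.2 cq hcq.1 hcq.2.1 hcq.2.2.1
    by_cases hEp : ∃ c, IsCollapse X (↑((2 * d + p1) :: pl) : Multiset ℕ) c
    · intro k
      have hwp := collapse_isCollapse hEp
      have UB := hwp.2.2.1 k
      rw [sortedD_coe _ hs_p'] at UB
      exact le_trans (LB k) (le_trans (h k) UB)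
    · exfalso
      rw [collapse_of_not_exists hEp] at h
      have h1 := h 1
      have LB1 := LB 1
      have hz : sortedD (0 : Multiset ℕ) = [] := by
        rw [sortedD, Multiset.sort_zero, List.reverse_nil]
      rw [hz] at h1
      simp only [List.take_nil, List.sum_nil, Nat.le_zero] at h1
      obtain ⟨hcpos, hcsum⟩ := hcq.1
      have hsumpos : 0 < cq.sum := by
        rw [hcsum]
        simp only [Multiset.sum_coe, List.sum_cons]
        omega
      rcases hC2 : sortedD cq with _ | ⟨c1, cl⟩
      · have h0 := coe_sortedD cq
        rw [hC2] at h0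
        rw [← h0] at hsumpos
        simp at hsumpos
      · have hc1 : 0 < c1 := hcpos c1 (by rw [← coe_sortedD cq, hC2]; simp)
        rw [hC2] at LB1
        simp only [List.take_succ_cons, List.take_zero, List.sum_cons, List.sum_nil] at LB1
        omega
  by_cases hCa : Con X q1
  · -- bad case: second part of q equals q1
    have hev : Even (q.count q1) := (ofType_iff X q).mp hqX q1 hCa
    have hm : 1 ≤ q.count q1 := Multiset.one_le_count_iff_mem.mpr (by rw [← hQc]; simp)
    have h2c : 2 ≤ q.count q1 := by rcases hev with ⟨t, ht⟩; omega
    have hmem : q1 ∈ ql := by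
      by_contra hmm
      rw [← hQc, Multiset.coe_count, List.count_cons_self,
        List.count_eq_zero_of_not_mem hmm] at h2c
      omega
    rcases ql with _ | ⟨b, ql'⟩
    · simp at hmem
    have hb : b = q1 := by
      have h1 : b ≤ q1 := hql b (List.mem_cons_self)
      have h2 : q1 ≤ b := by
        rcases List.mem_cons.mp hmem with heq | hm2
        · omega
        · exact (List.pairwise_cons.mp ((List.pairwise_cons.mp hQs).2)).1 q1 hm2
      omega
    subst hb
    have hqX2 : OfType X (↑(b :: b :: ql') : Multiset ℕ) := by rw [hQc]; exact hqX
    have hqpos2 : ∀ x ∈ b :: b :: ql', 0 < x := by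
      intro x hx
      exact hqpos x (by rw [← hQc]; exact Multiset.mem_coe.mpr hx)
    have hcol := isCollapse_bad X d b ql' hd hq1pos hQs hqpos2 hqX2 hCa
    have KEY := main _ hcol
    have hql' : ∀ x ∈ ql', x ≤ b :=
      (List.pairwise_cons.mp ((List.pairwise_cons.mp hQs).2)).1
    have hql's : ql'.Pairwise (· ≥ ·) :=
      (List.pairwise_cons.mp ((List.pairwise_cons.mp hQs).2)).2
    have hc_sorted : ((2 * d + b - 1) :: (b + 1) :: ql').Pairwise (· ≥ ·) := by
      rw [List.pairwise_cons]
      constructor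
      · intro x hx
        rcases List.mem_cons.mp hx with rfl | hx
        · omega
        · have := hql' x hx; omega
      · rw [List.pairwise_cons]
        exact ⟨fun x hx => by have := hql' x hx; omega, hql's⟩
    have hplt : (pl.take 1).sum ≤ p1 := by
      rcases pl with _ | ⟨p2, pl'⟩
      · simp
      · simp only [List.take_succ_cons, List.take_zero, List.sum_cons, List.sum_nil]
        have := hpl p2 (List.mem_cons_self)
        omega
    have K1 := KEY 1
    have K2 := KEY 2
    rw [sortedD_coe _ hc_sorted] at K1 K2
    simp only [List.take_succ_cons, List.take_zero, List.sum_cons, List.sum_nil] at K1 K2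
    have hq1p1 : b ≤ p1 := by omega
    intro k
    rw [hP, hQ]
    rcases k with _ | k
    · simp
    rcases k with _ | k
    · simp only [List.take_succ_cons, List.take_zero, List.sum_cons, List.sum_nil]
      omega
    · have hK := KEY (k + 1 + 1)
      rw [sortedD_coe _ hc_sorted] at hK
      simp only [List.take_succ_cons, List.sum_cons] at hK ⊢
      omega
  · -- good case: q' is already of type X
    have hqX' : OfType X (↑((2 * d + q1) :: ql) : Multiset ℕ) := by
      rw [ofType_iff]
      intro x hx
      have hx1 : x ≠ 2 * d + q1 := by
        intro he
        apply hCa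
        rw [he, add_comm] at hx
        exact (con_add_two_mul X q1 d).mp hx
      have hx2 : x ≠ q1 := fun he => hCa (he ▸ hx)
      have h1 := (ofType_iff X q).mp hqX x hx
      rw [← hQc, Multiset.coe_count, List.count_cons_of_ne (Ne.symm hx2)] at h1
      rw [Multiset.coe_count, List.count_cons_of_ne (Ne.symm hx1)]
      exact h1
    have hs_q' : ((2 * d + q1) :: ql).Pairwise (· ≥ ·) := by
      rw [List.pairwise_cons]
      exact ⟨fun x hx => by have := hql x hx; omega, (List.pairwise_cons.mp hQs).2⟩
    have hqpos' : ∀ x ∈ (↑((2 * d + q1) :: ql) : Multiset ℕ), 0 < x := by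
      intro x hx
      rcases List.mem_cons.mp (Multiset.mem_coe.mp hx) with rfl | hx
      · omega
      · exact hqpos x (by rw [← hQc]; simp [hx])
    have hcol := isCollapse_self X (↑((2 * d + q1) :: ql)) hqpos' hqX'
    have KEY := main _ hcol
    intro k
    rw [hP, hQ]
    rcases k with _ | k
    · simp
    have hK := KEY (k + 1)
    rw [sortedD_coe _ hs_q'] at hK
    simp only [List.take_succ_cons, List.sum_cons] at hK ⊢
    omega
end

section
/- Let p be a partition of 2n+1 and x a positive integer such that p has at least one part equal to 2x+1. Let r := p_{>2x+1} ⊔ p_{<2x+1} (the partition obtained from p by removing all parts equal to 2x+1). Then p_B = r_X ⊔ p_{=2x+1}, where X = B if |r| is odd and X = D if |r| is even. -/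
open Multiset

namespace BV

/-- prefix sums of the sorted partition -/
def S (p : Multiset ℕ) (k : ℕ) : ℕ := ((sortedD p).take k).sum

def Pos (p : Multiset ℕ) : Prop := ∀ x ∈ p, 0 < x

def isBD (p : Multiset ℕ) : Prop := ∀ v, Even v → Even (p.count v)

/-- number of parts ≥ v -/
def N (p : Multiset ℕ) (v : ℕ) : ℕ := Multiset.card (p.filter (v ≤ ·))

def nth (p : Multiset ℕ) (i : ℕ) : ℕ := (sortedD p).getD i 0

instance : IsAntisymm ℕ (· ≥ ·) := ⟨fun _ _ h h' => le_antisymm h' h⟩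

lemma sortedD_coe (p : Multiset ℕ) : (↑(sortedD p) : Multiset ℕ) = p := by
  unfold sortedD
  rw [Multiset.coe_reverse, Multiset.sort_eq]

lemma sortedD_sorted (p : Multiset ℕ) : (sortedD p).Pairwise (· ≥ ·) := by
  unfold sortedD
  rw [List.pairwise_reverse]
  have h := Multiset.pairwise_sort (r := (· ≤ ·)) (s := p)
  exact h

lemma sortedD_unique {p : Multiset ℕ} {l : List ℕ} (hl : l.Pairwise (· ≥ ·))
    (hc : (↑l : Multiset ℕ) = p) : sortedD p = l := by
  apply List.Perm.eq_of_pairwise (fun a b _ _ h1 h2 => le_antisymm h2 h1) (sortedD_sorted p) hl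
  rw [← Multiset.coe_eq_coe, sortedD_coe, hc]

lemma sortedD_length (p : Multiset ℕ) : (sortedD p).length = Multiset.card p := by
  rw [← Multiset.coe_card, sortedD_coe]

lemma sortedD_sum (p : Multiset ℕ) : (sortedD p).sum = p.sum := by
  rw [← Multiset.sum_coe, sortedD_coe]

lemma mem_sortedD {p : Multiset ℕ} {x : ℕ} : x ∈ sortedD p ↔ x ∈ p := by
  rw [← Multiset.mem_coe, sortedD_coe]

/-- S basic lemmas -/
lemma S_succ (p : Multiset ℕ) (k : ℕ) : S p (k + 1) = S p k + nth p k := by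
  unfold S nth
  rcases lt_or_ge k (sortedD p).length with h | h
  · rw [List.sum_take_succ _ _ h, List.getD_eq_getElem _ _ h]
  · rw [List.take_of_length_le h, List.take_of_length_le (le_trans h (Nat.le_succ k)),
      List.getD_eq_default _ _ h]
    omega

lemma S_zero (p : Multiset ℕ) : S p 0 = 0 := rfl

lemma S_mono (p : Multiset ℕ) {k k' : ℕ} (h : k ≤ k') : S p k ≤ S p k' := by
  induction k' with
  | zero =>
    have : k = 0 := Nat.le_zero.mp h
    subst this; exact le_refl _
  | succ n ih =>
    rcases Nat.eq_or_lt_of_le h with h' | h'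
    · exact h' ▸ le_refl _
    · exact le_trans (ih (by omega)) (by rw [S_succ]; omega)

lemma S_of_card_le (p : Multiset ℕ) {k : ℕ} (h : Multiset.card p ≤ k) : S p k = p.sum := by
  unfold S
  rw [List.take_of_length_le (by rw [sortedD_length]; exact h), sortedD_sum]

lemma S_le_sum (p : Multiset ℕ) (k : ℕ) : S p k ≤ p.sum := by
  rcases le_or_gt (Multiset.card p) k with h | h
  · exact (S_of_card_le p h).le
  · calc S p k ≤ S p (Multiset.card p) := S_mono p h.le
      _ = p.sum := S_of_card_le p le_rfl

lemma sum_eq_S_card (p : Multiset ℕ) : p.sum = S p (Multiset.card p) :=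
  (S_of_card_le p le_rfl).symm

/-- getD of a sorted (≥) list is antitone -/
lemma getD_anti {l : List ℕ} (hl : l.Pairwise (· ≥ ·)) {i j : ℕ} (h : i ≤ j) :
    l.getD j 0 ≤ l.getD i 0 := by
  rcases lt_or_ge j l.length with hj | hj
  · have hi : i < l.length := lt_of_le_of_lt h hj
    rw [List.getD_eq_getElem _ _ hj, List.getD_eq_getElem _ _ hi]
    rcases Nat.eq_or_lt_of_le h with h' | h'
    · subst h'; exact le_refl _
    · exact List.pairwise_iff_getElem.mp hl i j hi hj h'
  · rw [List.getD_eq_default _ _ hj]; exact Nat.zero_le _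

lemma nth_anti (p : Multiset ℕ) {i j : ℕ} (h : i ≤ j) : nth p j ≤ nth p i :=
  getD_anti (sortedD_sorted p) h

/-- the bridge: value at index i is ≥ v iff i < number of parts ≥ v -/
lemma getD_ge_iff {l : List ℕ} (hl : l.Pairwise (· ≥ ·)) {v : ℕ} (hv : 0 < v) (i : ℕ) :
    v ≤ l.getD i 0 ↔ i < l.countP (fun x => decide (v ≤ x)) := by
  induction l generalizing i with
  | nil =>
    rw [List.getD_nil, List.countP_nil]
    omega
  | cons x xs ih =>
    have hs := List.pairwise_cons.mp hl
    by_cases hx : v ≤ x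
    · rw [List.countP_cons_of_pos (by simpa using hx)]
      cases i with
      | zero =>
        rw [List.getD_cons_zero]
        constructor
        · intro _; omega
        · intro _; exact hx
      | succ n =>
        rw [List.getD_cons_succ, ih hs.2]
        omega
    · have hz : xs.countP (fun x => decide (v ≤ x)) = 0 := by
        rw [List.countP_eq_zero]
        intro y hy
        simp only [decide_eq_true_eq]
        have := hs.1 y hy
        omega
      rw [List.countP_cons_of_neg (by simpa using hx), hz]
      cases i with
      | zero =>
        rw [List.getD_cons_zero]
        constructor
        · intro h; exact absurd h hx
        · intro h; omega
      | succ n =>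
        rw [List.getD_cons_succ, ih hs.2, hz]
        omega

lemma countP_sortedD (p : Multiset ℕ) (v : ℕ) :
    (sortedD p).countP (fun x => decide (v ≤ x)) = N p v := by
  unfold N
  rw [← Multiset.coe_countP, sortedD_coe, Multiset.countP_eq_card_filter]

lemma nth_ge_iff {p : Multiset ℕ} {v : ℕ} (hv : 0 < v) (i : ℕ) :
    v ≤ nth p i ↔ i < N p v := by
  rw [nth, getD_ge_iff (sortedD_sorted p) hv, countP_sortedD]



/-! ## submultiset and witness lemmas -/

lemma N_mono_le {u p : Multiset ℕ} (h : u ≤ p) (v : ℕ) : N u v ≤ N p v :=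
  Multiset.card_le_card (Multiset.filter_le_filter _ h)

lemma N_anti (p : Multiset ℕ) {v w : ℕ} (h : v ≤ w) : N p w ≤ N p v := by
  apply Multiset.card_le_card
  apply Multiset.le_filter.mpr
  constructor
  · exact Multiset.filter_le _ p
  · intro x hx
    have := Multiset.of_mem_filter hx
    omega

lemma N_le_card (p : Multiset ℕ) (v : ℕ) : N p v ≤ Multiset.card p :=
  Multiset.card_le_card (Multiset.filter_le _ p)

lemma nth_le_of_le {u p : Multiset ℕ} (h : u ≤ p) (i : ℕ) : nth u i ≤ nth p i := by
  rcases Nat.eq_zero_or_pos (nth u i) with h0 | h0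
  · omega
  · have : nth u i ≤ nth u i := le_refl _
    have hi : i < N u (nth u i) := (nth_ge_iff h0 i).mp this
    have : i < N p (nth u i) := lt_of_lt_of_le hi (N_mono_le h _)
    exact (nth_ge_iff h0 i).mpr this

lemma S_le_of_nth_le {u p : Multiset ℕ} (h : ∀ i, nth u i ≤ nth p i) (k : ℕ) :
    S u k ≤ S p k := by
  induction k with
  | zero => simp [S_zero]
  | succ n ih => rw [S_succ, S_succ]; exact Nat.add_le_add ih (h n)

lemma S_le_S_of_le {u p : Multiset ℕ} (h : u ≤ p) (k : ℕ) : S u k ≤ S p k :=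
  S_le_of_nth_le (nth_le_of_le h) k

lemma card_le_of_le {u p : Multiset ℕ} (h : u ≤ p) : Multiset.card u ≤ Multiset.card p :=
  Multiset.card_le_card h

/-- fundamental: any submultiset of `p` with at most `k` elements has sum at most `S p k`. -/
lemma sum_le_S {u p : Multiset ℕ} (h : u ≤ p) {k : ℕ} (hk : Multiset.card u ≤ k) :
    u.sum ≤ S p k := by
  calc u.sum = S u (Multiset.card u) := sum_eq_S_card u
    _ ≤ S p (Multiset.card u) := S_le_S_of_le h _
    _ ≤ S p k := S_mono p hk

/-- the top-k witness -/
def topk (p : Multiset ℕ) (k : ℕ) : Multiset ℕ := ↑((sortedD p).take k)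

lemma topk_le (p : Multiset ℕ) (k : ℕ) : topk p k ≤ p := by
  have h : (↑((sortedD p).take k) : Multiset ℕ) ≤ ↑(sortedD p) :=
    Multiset.coe_le.mpr (List.take_sublist k (sortedD p)).subperm
  rwa [sortedD_coe] at h

lemma card_topk (p : Multiset ℕ) (k : ℕ) : Multiset.card (topk p k) ≤ k := by
  rw [topk, Multiset.coe_card, List.length_take]
  omega

lemma sum_topk (p : Multiset ℕ) (k : ℕ) : (topk p k).sum = S p k := rfl

/-- decomposition of a submultiset of a sum -/
lemma le_add_decomp {u x y : Multiset ℕ} (h : u ≤ x + y) :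
    ∃ u₁ u₂, u₁ ≤ x ∧ u₂ ≤ y ∧ u = u₁ + u₂ := by
  refine ⟨u ∩ x, u - u ∩ x, Multiset.inter_le_right, ?_, ?_⟩
  · rw [Multiset.le_iff_count]
    intro a
    rw [Multiset.count_sub, Multiset.count_inter]
    have hu := Multiset.count_le_of_le a h
    rw [Multiset.count_add] at hu
    omega
  · rw [add_comm]
    exact (tsub_add_cancel_of_le (Multiset.inter_le_left)).symm

/-- superadditivity of prefix sums under multiset union -/
lemma S_add_ge (x y : Multiset ℕ) (k₁ k₂ : ℕ) : S x k₁ + S y k₂ ≤ S (x + y) (k₁ + k₂) := by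
  have h1 : topk x k₁ + topk y k₂ ≤ x + y := add_le_add (topk_le x k₁) (topk_le y k₂)
  have h2 : Multiset.card (topk x k₁ + topk y k₂) ≤ k₁ + k₂ := by
    rw [Multiset.card_add]
    exact add_le_add (card_topk x k₁) (card_topk y k₂)
  calc S x k₁ + S y k₂ = (topk x k₁ + topk y k₂).sum := by
        rw [Multiset.sum_add, sum_topk, sum_topk]
    _ ≤ S (x + y) (k₁ + k₂) := sum_le_S h1 h2

/-- subadditivity -/
lemma S_add_le (x y : Multiset ℕ) (k : ℕ) :
    ∃ k₁ k₂, k₁ + k₂ ≤ k ∧ S (x + y) k = S x k₁ + S y k₂ ∨ True := ⟨0,0, by simp⟩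

lemma Dom_iff (p q : Multiset ℕ) : Dom p q ↔ ∀ k, S q k ≤ S p k := Iff.rfl

lemma Dom_refl (p : Multiset ℕ) : Dom p p := fun _ => le_refl _

lemma Dom_trans {p q r : Multiset ℕ} (h1 : Dom p q) (h2 : Dom q r) : Dom p r :=
  fun k => le_trans (h2 k) (h1 k)

/-- dominance is compatible with union -/
lemma Dom_add_right {p q : Multiset ℕ} (h : Dom p q) (u : Multiset ℕ) :
    Dom (p + u) (q + u) := by
  intro k
  show S (q + u) k ≤ S (p + u) k
  obtain ⟨w₁, w₂, hw₁, hw₂, hw⟩ := le_add_decomp (topk_le (q + u) k)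
  have hcard : Multiset.card w₁ + Multiset.card w₂ ≤ k := by
    rw [← Multiset.card_add, ← hw]; exact card_topk _ k
  calc S (q + u) k = (topk (q + u) k).sum := (sum_topk _ k).symm
    _ = w₁.sum + w₂.sum := by rw [hw, Multiset.sum_add]
    _ ≤ S q (Multiset.card w₁) + w₂.sum :=
        Nat.add_le_add_right (sum_le_S hw₁ (le_refl _)) _
    _ ≤ S p (Multiset.card w₁) + S u (Multiset.card w₂) :=
        Nat.add_le_add (h _) (sum_le_S hw₂ (le_refl _))
    _ ≤ S (p + u) (Multiset.card w₁ + Multiset.card w₂) := S_add_ge _ _ _ _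
    _ ≤ S (p + u) k := S_mono _ hcard

/-- two positive partitions with the same prefix sums are equal -/
lemma eq_of_getD_eq : ∀ (l₁ l₂ : List ℕ), (0 ∉ l₁) → (0 ∉ l₂) →
    (∀ i, l₁.getD i 0 = l₂.getD i 0) → l₁ = l₂
  | [], [], _, _, _ => rfl
  | [], (y :: ys), _, h2, h => by
      have := h 0
      rw [List.getD_nil, List.getD_cons_zero] at this
      exact absurd (this ▸ (List.mem_cons_self (a := y) (l := ys))) h2
  | (x :: xs), [], h1, _, h => by
      have := h 0
      rw [List.getD_nil, List.getD_cons_zero] at this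
      exact absurd (this.symm ▸ (List.mem_cons_self (a := x) (l := xs))) h1
  | (x :: xs), (y :: ys), h1, h2, h => by
      have h0 := h 0
      rw [List.getD_cons_zero, List.getD_cons_zero] at h0
      have : xs = ys := eq_of_getD_eq xs ys (fun hx => h1 (List.mem_cons_of_mem _ hx))
        (fun hy => h2 (List.mem_cons_of_mem _ hy))
        (fun i => by have := h (i + 1); rwa [List.getD_cons_succ, List.getD_cons_succ] at this)
      rw [h0, this]

lemma eq_of_S_eq {p q : Multiset ℕ} (hp : Pos p) (hq : Pos q)
    (h : ∀ k, S p k = S q k) : p = q := by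
  have hnth : ∀ i, nth p i = nth q i := by
    intro i
    have h1 := S_succ p i
    have h2 := S_succ q i
    have := h i; have := h (i + 1)
    omega
  have : sortedD p = sortedD q := by
    apply eq_of_getD_eq
    · intro h0
      exact absurd (hp 0 (mem_sortedD.mp h0)) (lt_irrefl 0)
    · intro h0
      exact absurd (hq 0 (mem_sortedD.mp h0)) (lt_irrefl 0)
    · exact hnth
  rw [← sortedD_coe p, ← sortedD_coe q, this]

/-! ## sorted filter/take interactions -/

lemma filter_eq_take {l : List ℕ} (hl : l.Pairwise (· ≥ ·)) (v : ℕ) :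
    l.filter (fun x => decide (v ≤ x)) = l.take (l.countP (fun x => decide (v ≤ x))) := by
  induction l with
  | nil => rfl
  | cons x xs ih =>
    have hs := List.pairwise_cons.mp hl
    by_cases hx : v ≤ x
    · rw [List.countP_cons_of_pos (by simpa using hx), List.filter_cons_of_pos
        (by simpa using hx), List.take_succ_cons, ih hs.2]
    · have hz : xs.countP (fun x => decide (v ≤ x)) = 0 := by
        rw [List.countP_eq_zero]
        intro y hy
        simp only [decide_eq_true_eq]
        have := hs.1 y hy
        omega
      have hfz : xs.filter (fun x => decide (v ≤ x)) = [] := by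
        rw [List.filter_eq_nil_iff]
        intro y hy
        simp only [decide_eq_true_eq]
        have := hs.1 y hy
        omega
      rw [List.countP_cons_of_neg (by simpa using hx), List.filter_cons_of_neg
        (by simpa using hx), hz, List.take_zero, hfz]

lemma sortedD_filter (p : Multiset ℕ) (v : ℕ) :
    sortedD (p.filter (v ≤ ·)) = (sortedD p).filter (fun x => decide (v ≤ x)) := by
  apply sortedD_unique
  · exact (sortedD_sorted p).filter _
  · rw [← Multiset.filter_coe, sortedD_coe]

lemma sortedD_filter_take (p : Multiset ℕ) (v : ℕ) :
    sortedD (p.filter (v ≤ ·)) = (sortedD p).take (N p v) := by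
  rw [sortedD_filter, filter_eq_take (sortedD_sorted p), countP_sortedD]

/-- sum of all parts ≥ v equals the prefix sum at N p v -/
lemma filter_sum_eq_S (p : Multiset ℕ) (v : ℕ) :
    (p.filter (v ≤ ·)).sum = S p (N p v) := by
  have : (p.filter (v ≤ ·)).sum = (sortedD (p.filter (v ≤ ·))).sum := (sortedD_sum _).symm
  rw [this, sortedD_filter_take]
  rfl

/-- prefix sums below N p v only see parts ≥ v -/
lemma S_eq_S_filter {p : Multiset ℕ} {v k : ℕ} (hk : k ≤ N p v) :
    S p k = S (p.filter (v ≤ ·)) k := by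
  show ((sortedD p).take k).sum = ((sortedD (p.filter (v ≤ ·))).take k).sum
  rw [sortedD_filter_take, List.take_take, min_eq_left hk]

/-- appending a minimal element doesn't change low prefix sums -/
lemma sortedD_add_min {X : Multiset ℕ} {v : ℕ} (h : ∀ x ∈ X, v ≤ x) :
    sortedD (X + {v}) = sortedD X ++ [v] := by
  apply sortedD_unique
  · rw [List.pairwise_append]
    refine ⟨sortedD_sorted X, List.pairwise_singleton _ _, ?_⟩
    intro a ha b hb
    rw [List.mem_singleton] at hb
    subst hb
    exact h a (mem_sortedD.mp ha)
  · rw [← Multiset.coe_add, sortedD_coe, Multiset.coe_singleton]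

lemma S_add_min {X : Multiset ℕ} {v : ℕ} (h : ∀ x ∈ X, v ≤ x) {k : ℕ}
    (hk : k ≤ Multiset.card X) : S (X + {v}) k = S X k := by
  show ((sortedD (X + {v})).take k).sum = _
  rw [sortedD_add_min h, List.take_append_of_le_length (by rw [sortedD_length]; exact hk)]
  rfl

/-- counting in prefixes -/
lemma countP_take {l : List ℕ} (hl : l.Pairwise (· ≥ ·)) (v k : ℕ) :
    (l.take k).countP (fun x => decide (v ≤ x)) = min (l.countP (fun x => decide (v ≤ x))) k := by
  induction l generalizing k with
  | nil => simp
  | cons x xs ih =>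
    have hs := List.pairwise_cons.mp hl
    cases k with
    | zero => simp
    | succ n =>
      rw [List.take_succ_cons]
      by_cases hx : v ≤ x
      · rw [List.countP_cons_of_pos (by simpa using hx),
          List.countP_cons_of_pos (by simpa using hx), ih hs.2]
        omega
      · have hz : ∀ m : List ℕ, (∀ y ∈ m, y ≤ x) → m.countP (fun x => decide (v ≤ x)) = 0 := by
          intro m hm
          rw [List.countP_eq_zero]
          intro y hy
          simp only [decide_eq_true_eq]
          have := hm y hy
          omega
        rw [List.countP_cons_of_neg (by simpa using hx),
          List.countP_cons_of_neg (by simpa using hx),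
          hz _ (fun y hy => hs.1 y hy), hz _ (fun y hy => hs.1 y (List.mem_of_mem_take hy))]
        simp

lemma N_topk (p : Multiset ℕ) (v k : ℕ) : N (topk p k) v = min (N p v) k := by
  unfold N topk
  rw [Multiset.filter_coe, Multiset.coe_card, ← List.countP_eq_length_filter,
    countP_take (sortedD_sorted p), countP_sortedD]
  rfl

/-- N splits into count plus next N -/
lemma N_split (m : Multiset ℕ) (v : ℕ) : N m v = N m (v + 1) + m.count v := by
  induction m using Multiset.induction_on with
  | empty => rfl
  | cons a s ih =>
    unfold N at *
    rw [Multiset.filter_cons, Multiset.filter_cons, Multiset.count_cons]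
    rcases Nat.lt_trichotomy a v with h | h | h
    · rw [if_neg (by omega), if_neg (by omega), if_neg (by omega)]
      simpa using ih
    · subst h
      rw [if_pos (le_refl _), if_neg (by omega), if_pos rfl]
      simp only [Multiset.card_add, Multiset.card_singleton, zero_add]
      omega
    · rw [if_pos (by omega), if_pos (by omega), if_neg (by omega)]
      simp only [Multiset.card_add, Multiset.card_singleton, zero_add]
      omega

lemma count_eq_N_sub (m : Multiset ℕ) (v : ℕ) : m.count v = N m v - N m (v + 1) := by
  have := N_split m v
  omega

lemma count_topk (p : Multiset ℕ) (v k : ℕ) :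
    (topk p k).count v = min (N p v) k - min (N p (v + 1)) k := by
  rw [count_eq_N_sub, N_topk, N_topk]

/-! ## parity lemmas -/

lemma sum_map_add_one (m : Multiset ℕ) : (m.map (· + 1)).sum = m.sum + Multiset.card m := by
  induction m using Multiset.induction_on with
  | empty => rfl
  | cons a s ih =>
    rw [Multiset.map_cons, Multiset.sum_cons, Multiset.sum_cons, ih, Multiset.card_cons]
    ring

lemma even_sum_map_of_counts {m : Multiset ℕ} (h : ∀ v, Even v → Even (m.count v)) :
    Even ((m.map (· + 1)).sum) := by
  rw [Finset.sum_multiset_map_count]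
  apply Finset.even_sum
  intro v _
  rw [smul_eq_mul]
  rcases Nat.even_or_odd v with hv | hv
  · exact (h v hv).mul_right _
  · have : Even (v + 1) := by
      rcases hv with ⟨c, hc⟩
      exact ⟨c + 1, by omega⟩
    exact this.mul_left _

/-- parity of (sum + count) of high parts of a BD partition : always even -/
lemma even_sum_add_N_of_isBD {w : Multiset ℕ} (hw : isBD w) (v : ℕ) :
    Even ((w.filter (v ≤ ·)).sum + N w v) := by
  have h := even_sum_map_of_counts (m := w.filter (v ≤ ·)) (fun x hx => by
    rw [Multiset.count_filter]
    split
    · exact hw x hx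
    · exact Even.zero)
  rwa [sum_map_add_one] at h

/-- parity of (sum + count) of the parts ≥ a, when a is even, has odd count,
and all larger even values have even count : always odd -/
lemma odd_sum_add_N {p : Multiset ℕ} {a : ℕ} (ha : Even a) (hodd : Odd (p.count a))
    (hbig : ∀ v, Even v → a < v → Even (p.count v)) :
    Odd ((p.filter (a ≤ ·)).sum + N p a) := by
  set F := p.filter (a ≤ ·) with hF
  have hmem : a ∈ F.toFinset := by
    rw [Multiset.mem_toFinset, hF, Multiset.mem_filter]
    constructor
    · rw [← Multiset.count_pos]
      rcases hodd with ⟨c, hc⟩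
      omega
    · exact le_refl a
  have hsum : (F.map (· + 1)).sum = F.count a * (a + 1) +
      ∑ x ∈ F.toFinset.erase a, F.count x * (x + 1) := by
    rw [Finset.sum_multiset_map_count]
    simp only [smul_eq_mul]
    rw [← Finset.add_sum_erase _ _ hmem]
  have hca : F.count a = p.count a := by
    rw [hF, Multiset.count_filter, if_pos (le_refl a)]
  have hodd1 : Odd (F.count a * (a + 1)) := by
    rw [hca]
    rcases hodd with ⟨c, hc⟩
    rcases ha with ⟨d, hd⟩
    exact ⟨c * (a + 1) + d, by rw [hc]; nlinarith⟩
  have heven2 : Even (∑ x ∈ F.toFinset.erase a, F.count x * (x + 1)) := by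
    apply Finset.even_sum
    intro x hx
    have hxa : x ≠ a := Finset.ne_of_mem_erase hx
    have hxF : x ∈ F := Multiset.mem_toFinset.mp (Finset.mem_of_mem_erase hx)
    have hax : a ≤ x := (Multiset.mem_filter.mp (hF ▸ hxF)).2
    have hax' : a < x := lt_of_le_of_ne hax (Ne.symm hxa)
    rcases Nat.even_or_odd x with hx2 | hx2
    · have : Even (F.count x) := by
        rw [hF, Multiset.count_filter, if_pos hax]
        exact hbig x hx2 hax'
      exact this.mul_right _
    · have : Even (x + 1) := by
        rcases hx2 with ⟨c, hc⟩
        exact ⟨c + 1, by omega⟩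
      exact this.mul_left _
  have : Odd ((F.map (· + 1)).sum) := by
    rw [hsum]
    rcases hodd1 with ⟨c, hc⟩
    rcases heven2 with ⟨d, hd⟩
    exact ⟨c + d, by omega⟩
  rwa [sum_map_add_one] at this

/-! ## prefix sum estimates -/

lemma S_ge_add {p : Multiset ℕ} {v i j : ℕ} (hv : 0 < v) (hij : i ≤ j) (hj : j ≤ N p v) :
    S p i + (j - i) * v ≤ S p j := by
  induction j, hij using Nat.le_induction with
  | base => simp
  | succ n hn ih =>
    have hnth : v ≤ nth p n := (nth_ge_iff hv n).mpr (by omega)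
    have := ih (by omega)
    rw [S_succ]
    have : (n + 1 - i) * v = (n - i) * v + v := by
      rw [show n + 1 - i = (n - i) + 1 by omega, Nat.succ_mul]
    omega

lemma S_le_add {p : Multiset ℕ} {v i j : ℕ} (hij : i ≤ j) (hi : N p (v + 1) ≤ i) :
    S p j ≤ S p i + (j - i) * v := by
  induction j, hij using Nat.le_induction with
  | base => simp
  | succ n hn ih =>
    have hnth : nth p n ≤ v := by
      by_contra hcon
      have : v + 1 ≤ nth p n := by omega
      have := (nth_ge_iff (by omega) n).mp this
      omega
    rw [S_succ]
    have : (n + 1 - i) * v = (n - i) * v + v := by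
      rw [show n + 1 - i = (n - i) + 1 by omega, Nat.succ_mul]
    omega

lemma nth_le_nth_of_S_eq {p t : Multiset ℕ} (hdom : Dom p t) {k : ℕ}
    (heq : S t k = S p k) : nth t k ≤ nth p k := by
  have h1 := S_succ t k
  have h2 := S_succ p k
  have h3 : S t (k + 1) ≤ S p (k + 1) := hdom (k + 1)
  omega

/-! ## the key lemmas -/

section KeyLemmas

variable {p t : Multiset ℕ} {a : ℕ}

/-- no BD partition dominated by p can have an equal prefix sum at position N p a -/
lemma KL0 (ha0 : 0 < a) (hae : Even a) (haodd : Odd (p.count a))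
    (hbig : ∀ v, Even v → a < v → Even (p.count v))
    (ht : isBD t) (hdom : Dom p t)
    (heq : S t (N p a) = S p (N p a)) : False := by
  have ha2 : 2 ≤ a := by rcases hae with ⟨e, he⟩; omega
  have hNa : N p (a - 1 + 1) = N p a := by rw [show a - 1 + 1 = a by omega]
  have hNta : N t (a - 1 + 1) = N t a := by rw [show a - 1 + 1 = a by omega]
  set i := N p a with hi
  -- step 1 : N t a ≤ i
  have hnt : nth t i ≤ nth p i := nth_le_nth_of_S_eq hdom heq
  have hnpi : nth p i < a := by
    by_contra hcon
    have := (nth_ge_iff (p := p) ha0 i).mp (by omega)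
    omega
  have hu_le : N t a ≤ i := by
    by_contra hcon
    have := (nth_ge_iff (p := t) ha0 i).mpr (by omega)
    omega
  set u := N t a with hu
  -- step 2 : u = i
  have hu_eq : u = i := by
    by_contra hne
    have hlt : u < i := by omega
    have c1 : S t i ≤ S t u + (i - u) * (a - 1) := S_le_add (by omega) hNta.le
    have c2 : S t u ≤ S p u := hdom u
    have c3 : S p u + (i - u) * a ≤ S p i := S_ge_add ha0 (by omega) (le_refl _)
    have hmul : (i - u) * (a - 1) < (i - u) * a :=
      (Nat.mul_lt_mul_left (by omega)).mpr (by omega)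
    omega
  -- step 3 : parity
  have h1 : (t.filter (a ≤ ·)).sum = S t u := by rw [filter_sum_eq_S]
  have h2 : (p.filter (a ≤ ·)).sum = S p i := by rw [filter_sum_eq_S]
  have he : Even ((t.filter (a ≤ ·)).sum + N t a) := even_sum_add_N_of_isBD ht a
  have ho : Odd ((p.filter (a ≤ ·)).sum + N p a) := odd_sum_add_N hae haodd hbig
  rw [h1, ← hu] at he
  rw [h2, ← hi] at ho
  rw [hu_eq, heq] at he
  rcases he with ⟨e, he'⟩
  rcases ho with ⟨o, ho'⟩
  omega

/-- zone key lemma -/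
lemma KL2 {c k : ℕ} (ha0 : 0 < a) (hae : Even a) (haodd : Odd (p.count a))
    (hbig : ∀ v, Even v → a < v → Even (p.count v))
    (ht : isBD t) (hdom : Dom p t)
    (hc : Odd c) (hc0 : 0 < c) (hca : c < a)
    (hHZ : N p (c + 1) ≤ N p (a - 1))
    (hk1 : N p (c + 1) < k) (hk2 : k ≤ N p c)
    (heq : S t k = S p k) : False := by
  have ha2 : 2 ≤ a := by rcases hae with ⟨e, he⟩; omega
  have hNa : N p (a - 1 + 1) = N p a := by rw [show a - 1 + 1 = a by omega]
  set i := N p a with hi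
  set J := N p (c + 1) with hJ
  have hiJ : i ≤ J := N_anti p (by omega)
  -- p's zone prefix sums
  have hSpJ : S p J = S p i + (J - i) * (a - 1) := by
    have h1 : S p i + (J - i) * (a - 1) ≤ S p J := S_ge_add (by omega) hiJ hHZ
    have h2 : S p J ≤ S p i + (J - i) * (a - 1) := S_le_add hiJ hNa.le
    omega
  have hSpk : S p k = S p J + (k - J) * c := by
    have h1 : S p J + (k - J) * c ≤ S p k := S_ge_add hc0 (by omega) hk2
    have h2 : S p k ≤ S p J + (k - J) * c := S_le_add (by omega) (le_refl _)
    omega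
  -- step 1 : u₁ := N t (c+1) ≤ k
  have hnt : nth t k ≤ nth p k := nth_le_nth_of_S_eq hdom heq
  have hnpk : nth p k < c + 1 := by
    by_contra hcon
    have := (nth_ge_iff (p := p) (show (0:ℕ) < c + 1 by omega) k).mp (by omega)
    omega
  have hu1_le : N t (c + 1) ≤ k := by
    by_contra hcon
    have := (nth_ge_iff (p := t) (show (0:ℕ) < c + 1 by omega) k).mpr (by omega)
    omega
  set u₁ := N t (c + 1) with hu1
  -- chains
  have cA : S t k ≤ S t u₁ + (k - u₁) * c := S_le_add hu1_le (le_refl _)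
  have cB : S t u₁ ≤ S p u₁ := hdom u₁
  -- case analysis
  rcases lt_or_ge u₁ i with hcase1 | h1'
  · -- u₁ < i
    have c3 : S p u₁ + (i - u₁) * a ≤ S p i := S_ge_add ha0 (by omega) (le_refl _)
    have hsplit : (k - u₁) * c = (k - J) * c + (J - i) * c + (i - u₁) * c := by
      rw [← Nat.add_mul, ← Nat.add_mul]
      congr 1
      omega
    have hm1 : (J - i) * c ≤ (J - i) * (a - 1) := Nat.mul_le_mul_left _ (by omega)
    have hm2 : (i - u₁) * c < (i - u₁) * a :=
      (Nat.mul_lt_mul_left (by omega)).mpr (by omega)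
    omega
  rcases lt_or_ge u₁ J with hcase2 | h2'
  · -- i ≤ u₁ < J
    have hSpu : S p u₁ = S p i + (u₁ - i) * (a - 1) := by
      have h1 : S p i + (u₁ - i) * (a - 1) ≤ S p u₁ :=
        S_ge_add (by omega) h1' (le_trans (le_of_lt hcase2) hHZ)
      have h2 : S p u₁ ≤ S p i + (u₁ - i) * (a - 1) := S_le_add h1' hNa.le
      omega
    have hsplit : (k - u₁) * c = (k - J) * c + (J - u₁) * c := by
      rw [← Nat.add_mul]
      congr 1
      omega
    have hsplit2 : (J - i) * (a - 1) = (J - u₁) * (a - 1) + (u₁ - i) * (a - 1) := by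
      rw [← Nat.add_mul]
      congr 1
      omega
    have hkey : (J - u₁) * (a - 1) ≤ (J - u₁) * c := by omega
    have hac : a - 1 ≤ c := by
      by_contra hcon
      have := (Nat.mul_lt_mul_left (show 0 < J - u₁ by omega)).mpr (show c < a - 1 by omega)
      omega
    have hceq : c + 1 = a := by omega
    have : J = i := by rw [hJ, hi, hceq]
    omega
  · -- J ≤ u₁ ≤ k
    have hSpu : S p u₁ = S p J + (u₁ - J) * c := by
      have h1 : S p J + (u₁ - J) * c ≤ S p u₁ := S_ge_add hc0 h2' (by omega)
      have h2 : S p u₁ ≤ S p J + (u₁ - J) * c := S_le_add h2' (le_refl _)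
      omega
    have hsplit : (k - u₁) * c + (u₁ - J) * c = (k - J) * c := by
      rw [← Nat.add_mul]
      congr 1
      omega
    have hteq : S t u₁ = S p u₁ := by omega
    -- parity
    have h1 : (t.filter (c + 1 ≤ ·)).sum = S t u₁ := by rw [filter_sum_eq_S]
    have h2 : (p.filter (a ≤ ·)).sum = S p i := by rw [filter_sum_eq_S]
    have he : Even ((t.filter (c + 1 ≤ ·)).sum + N t (c + 1)) :=
      even_sum_add_N_of_isBD ht (c + 1)
    have ho : Odd ((p.filter (a ≤ ·)).sum + N p a) := odd_sum_add_N hae haodd hbig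
    rw [h1, ← hu1] at he
    rw [h2, ← hi] at ho
    have e1 : (J - i) * a = (J - i) * (a - 1) + (J - i) := by
      calc (J - i) * a = (J - i) * ((a - 1) + 1) := by rw [show (a - 1) + 1 = a by omega]
        _ = (J - i) * (a - 1) + (J - i) := Nat.mul_succ _ _
    have e2 : (u₁ - J) * (c + 1) = (u₁ - J) * c + (u₁ - J) := Nat.mul_succ _ _
    have harith : S p u₁ + u₁ = (S p i + i) + (J - i) * a + (u₁ - J) * (c + 1) := by
      omega
    have hea : Even ((J - i) * a) := hae.mul_left _
    have hec : Even ((u₁ - J) * (c + 1)) := by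
      have hcc : Even (c + 1) := by rcases hc with ⟨e, he'⟩; exact ⟨e + 1, by omega⟩
      exact hcc.mul_left _
    rw [hteq] at he
    rcases he with ⟨e3, he3⟩
    rcases ho with ⟨o1, ho1⟩
    rcases hea with ⟨e4, he4⟩
    rcases hec with ⟨e5, he5⟩
    omega

end KeyLemmas

/-! ## the collapse algorithm -/

def badSet (p : Multiset ℕ) : Finset ℕ :=
  p.toFinset.filter (fun v => Even v ∧ ¬ Even (p.count v))

def aVal (p : Multiset ℕ) : ℕ :=
  if h : (badSet p).Nonempty then (badSet p).max' h else 0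

def lows (p : Multiset ℕ) : Multiset ℕ := p.filter (· ≤ aVal p - 2)

def bVal (p : Multiset ℕ) : ℕ :=
  if h : (lows p).toFinset.Nonempty then ((lows p).toFinset).max' h else 0

def stepBD (p : Multiset ℕ) : Multiset ℕ :=
  if lows p = 0 then (p - {aVal p}) + {aVal p - 1, 1}
  else (p - {aVal p, bVal p}) + {aVal p - 1, bVal p + 1}

def mu (p : Multiset ℕ) : ℕ := (p.map (fun x => x * x)).sum

lemma isBD_of_badSet_empty {p : Multiset ℕ} (hpos : Pos p) (h : badSet p = ∅) : isBD p := by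
  intro v hv
  by_contra hodd
  have hvp : v ∈ p := by
    rw [← Multiset.count_pos]
    rcases Nat.even_or_odd (p.count v) with h' | h'
    · exact absurd h' hodd
    · rcases h' with ⟨e, he⟩; omega
  have : v ∈ badSet p := by
    rw [badSet, Finset.mem_filter, Multiset.mem_toFinset]
    exact ⟨hvp, hv, hodd⟩
  rw [h] at this
  exact absurd this (Finset.notMem_empty v)


lemma badSet_nonempty {r : Multiset ℕ} (hne : badSet r ≠ ∅) : (badSet r).Nonempty :=
  Finset.nonempty_iff_ne_empty.mpr hne

lemma aVal_mem {r : Multiset ℕ} (hne : badSet r ≠ ∅) : aVal r ∈ badSet r := by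
  rw [aVal, dif_pos (badSet_nonempty hne)]
  exact Finset.max'_mem _ _

lemma aVal_mem_r {r : Multiset ℕ} (h : aVal r ∈ badSet r) : aVal r ∈ r := by
  rw [badSet, Finset.mem_filter, Multiset.mem_toFinset] at h
  exact h.1

lemma aVal_even {r : Multiset ℕ} (h : aVal r ∈ badSet r) : Even (aVal r) := by
  rw [badSet, Finset.mem_filter] at h
  exact h.2.1

lemma aVal_count_odd {r : Multiset ℕ} (h : aVal r ∈ badSet r) : Odd (r.count (aVal r)) := by
  rw [badSet, Finset.mem_filter] at h
  exact Nat.not_even_iff_odd.mp h.2.2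

lemma aVal_max {r : Multiset ℕ} (hne : badSet r ≠ ∅) {v : ℕ} (hv : Even v)
    (hlt : aVal r < v) : Even (r.count v) := by
  by_contra hodd
  have hvp : v ∈ r := by
    rw [← Multiset.count_pos]
    rcases Nat.even_or_odd (r.count v) with h' | h'
    · exact absurd h' hodd
    · rcases h' with ⟨e, he⟩; omega
  have hmem : v ∈ badSet r := by
    rw [badSet, Finset.mem_filter, Multiset.mem_toFinset]
    exact ⟨hvp, hv, hodd⟩
  have := Finset.le_max' (badSet r) v hmem
  rw [aVal, dif_pos (badSet_nonempty hne)] at hlt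
  omega

lemma aVal_two_le {r : Multiset ℕ} (hpos : Pos r) (hne : badSet r ≠ ∅) : 2 ≤ aVal r := by
  have h := aVal_mem hne
  have h1 := hpos _ (aVal_mem_r h)
  rcases aVal_even h with ⟨e, he⟩
  omega

/-- non-append case facts -/
lemma bVal_mem {r : Multiset ℕ} (hlow : lows r ≠ 0) : bVal r ∈ lows r := by
  have hnonempty : (lows r).toFinset.Nonempty := by
    rcases Multiset.exists_mem_of_ne_zero hlow with ⟨x, hx⟩
    exact ⟨x, Multiset.mem_toFinset.mpr hx⟩
  rw [bVal, dif_pos hnonempty]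
  exact Multiset.mem_toFinset.mp (Finset.max'_mem _ _)

lemma bVal_le {r : Multiset ℕ} (hlow : lows r ≠ 0) : bVal r ≤ aVal r - 2 := by
  have := bVal_mem hlow
  rw [lows, Multiset.mem_filter] at this
  exact this.2

lemma bVal_mem_r {r : Multiset ℕ} (hlow : lows r ≠ 0) : bVal r ∈ r := by
  have := bVal_mem hlow
  rw [lows, Multiset.mem_filter] at this
  exact this.1

lemma bVal_max {r : Multiset ℕ} (hlow : lows r ≠ 0) {x : ℕ} (hx : x ∈ r)
    (hxa : x ≤ aVal r - 2) : x ≤ bVal r := by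
  have hnonempty : (lows r).toFinset.Nonempty := by
    rcases Multiset.exists_mem_of_ne_zero hlow with ⟨y, hy⟩
    exact ⟨y, Multiset.mem_toFinset.mpr hy⟩
  have hmem : x ∈ (lows r).toFinset := by
    rw [Multiset.mem_toFinset, lows, Multiset.mem_filter]
    exact ⟨hx, hxa⟩
  rw [bVal, dif_pos hnonempty]
  exact Finset.le_max' _ x hmem

lemma count_pair (x y v : ℕ) : ({x, y} : Multiset ℕ).count v =
    (if v = x then 1 else 0) + (if v = y then 1 else 0) := by
  show (x ::ₘ {y}).count v = _
  rw [Multiset.count_cons, Multiset.count_singleton]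
  split_ifs with h1 h2 h2 <;> omega

lemma pair_le {r : Multiset ℕ} (hpos : Pos r) (hne : badSet r ≠ ∅) (hlow : lows r ≠ 0) :
    ({aVal r, bVal r} : Multiset ℕ) ≤ r := by
  have ha := aVal_mem_r (aVal_mem hne)
  have hb := bVal_mem_r hlow
  have hab : aVal r ≠ bVal r := by
    have := bVal_le hlow
    have := aVal_two_le hpos hne
    omega
  rw [Multiset.le_iff_count]
  intro v
  rw [count_pair]
  by_cases h1 : v = aVal r
  · rw [if_pos h1, if_neg (by omega)]
    have : 0 < r.count v := Multiset.count_pos.mpr (h1 ▸ ha)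
    omega
  · rw [if_neg h1]
    by_cases h2 : v = bVal r
    · rw [if_pos h2]
      have : 0 < r.count v := Multiset.count_pos.mpr (h2 ▸ hb)
      omega
    · rw [if_neg h2]
      omega

lemma step_decomp {r : Multiset ℕ} (hpos : Pos r) (hne : badSet r ≠ ∅) (hlow : lows r ≠ 0) :
    r = (r - {aVal r, bVal r}) + {aVal r, bVal r} ∧
    stepBD r = (r - {aVal r, bVal r}) + {aVal r - 1, bVal r + 1} := by
  constructor
  · rw [tsub_add_cancel_of_le (pair_le hpos hne hlow)]
  · rw [stepBD, if_neg hlow]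

lemma step_decomp0 {r : Multiset ℕ} (hne : badSet r ≠ ∅) (hlow : lows r = 0) :
    r = (r - {aVal r}) + {aVal r} ∧
    stepBD r = (r - {aVal r}) + {aVal r - 1, 1} := by
  constructor
  · rw [tsub_add_cancel_of_le (Multiset.singleton_le.mpr (aVal_mem_r (aVal_mem hne)))]
  · rw [stepBD, if_pos hlow]

lemma sum_pair (x y : ℕ) : ({x, y} : Multiset ℕ).sum = x + y := by
  show (x ::ₘ {y}).sum = x + y
  rw [Multiset.sum_cons, Multiset.sum_singleton]

lemma card_pair (x y : ℕ) : Multiset.card ({x, y} : Multiset ℕ) = 2 := by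
  show Multiset.card (x ::ₘ {y}) = 2
  rw [Multiset.card_cons, Multiset.card_singleton]

lemma map_sq_pair (x y : ℕ) : (({x, y} : Multiset ℕ).map (fun z => z * z)).sum
    = x * x + y * y := by
  show ((x ::ₘ {y}).map (fun z => z * z)).sum = _
  rw [Multiset.map_cons, Multiset.map_singleton, Multiset.sum_cons, Multiset.sum_singleton]

lemma step_sum {r : Multiset ℕ} (hpos : Pos r) (hne : badSet r ≠ ∅) :
    (stepBD r).sum = r.sum := by
  have ha2 := aVal_two_le hpos hne
  by_cases hlow : lows r = 0
  · obtain ⟨h1, h2⟩ := step_decomp0 hne hlow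
    rw [h2]
    conv_rhs => rw [h1]
    rw [Multiset.sum_add, Multiset.sum_add, sum_pair, Multiset.sum_singleton]
    omega
  · obtain ⟨h1, h2⟩ := step_decomp hpos hne hlow
    have hb := bVal_le hlow
    rw [h2]
    conv_rhs => rw [h1]
    rw [Multiset.sum_add, Multiset.sum_add, sum_pair, sum_pair]
    omega

lemma step_pos {r : Multiset ℕ} (hpos : Pos r) (hne : badSet r ≠ ∅) : Pos (stepBD r) := by
  have ha2 := aVal_two_le hpos hne
  intro x hx
  by_cases hlow : lows r = 0
  · obtain ⟨h1, h2⟩ := step_decomp0 hne hlow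
    rw [h2, Multiset.mem_add] at hx
    rcases hx with hx | hx
    · exact hpos x (Multiset.mem_of_le (Multiset.sub_le_self _ _) hx)
    · rcases Multiset.mem_cons.mp hx with hx | hx
      · omega
      · rw [Multiset.mem_singleton] at hx; omega
  · obtain ⟨h1, h2⟩ := step_decomp hpos hne hlow
    have hb0 := hpos _ (bVal_mem_r hlow)
    rw [h2, Multiset.mem_add] at hx
    rcases hx with hx | hx
    · exact hpos x (Multiset.mem_of_le (Multiset.sub_le_self _ _) hx)
    · rcases Multiset.mem_cons.mp hx with hx | hx
      · omega
      · rw [Multiset.mem_singleton] at hx; omega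

lemma step_mu {r : Multiset ℕ} (hpos : Pos r) (hne : badSet r ≠ ∅) :
    mu (stepBD r) < mu r := by
  have ha2 := aVal_two_le hpos hne
  obtain ⟨d, hd⟩ : ∃ d, aVal r = d + 2 := ⟨aVal r - 2, by omega⟩
  by_cases hlow : lows r = 0
  · obtain ⟨h1, h2⟩ := step_decomp0 hne hlow
    rw [h2]
    conv_rhs => rw [h1]
    rw [mu, mu, Multiset.map_add, Multiset.map_add, Multiset.sum_add, Multiset.sum_add]
    rw [map_sq_pair, Multiset.map_singleton, Multiset.sum_singleton, hd]
    have e : d + 2 - 1 = d + 1 := by omega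
    rw [e]
    nlinarith
  · obtain ⟨h1, h2⟩ := step_decomp hpos hne hlow
    have hb := bVal_le hlow
    rw [h2]
    conv_rhs => rw [h1]
    rw [mu, mu, Multiset.map_add, Multiset.map_add, Multiset.sum_add, Multiset.sum_add]
    rw [map_sq_pair, map_sq_pair, hd]
    have e : d + 2 - 1 = d + 1 := by omega
    rw [e]
    have hble : bVal r ≤ d := by omega
    nlinarith

/-! ## dominance facts for one step -/

lemma mem_pair {x y z : ℕ} : x ∈ ({y, z} : Multiset ℕ) ↔ x = y ∨ x = z := by
  constructor
  · intro h
    rcases Multiset.mem_cons.mp h with h | h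
    · exact Or.inl h
    · exact Or.inr (Multiset.mem_singleton.mp h)
  · intro h
    rcases h with h | h
    · exact h ▸ Multiset.mem_cons_self _ _
    · exact Multiset.mem_cons.mpr (Or.inr (h ▸ Multiset.mem_singleton_self _))

lemma S_le_of_exchange {core pr pr2 : Multiset ℕ}
    (h : ∀ u₁ ≤ pr2, ∃ m, m ≤ pr ∧ Multiset.card m ≤ Multiset.card u₁ ∧ u₁.sum ≤ m.sum)
    (k : ℕ) : S (core + pr2) k ≤ S (core + pr) k := by
  obtain ⟨u₀, u₁, hu₀, hu₁, hu⟩ := le_add_decomp (topk_le (core + pr2) k)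
  obtain ⟨m, hm, hmc, hms⟩ := h u₁ hu₁
  have hcard : Multiset.card u₀ + Multiset.card m ≤ k := by
    have := card_topk (core + pr2) k
    rw [hu, Multiset.card_add] at this
    omega
  calc S (core + pr2) k = (topk (core + pr2) k).sum := (sum_topk _ k).symm
    _ = u₀.sum + u₁.sum := by rw [hu, Multiset.sum_add]
    _ ≤ u₀.sum + m.sum := Nat.add_le_add_left hms _
    _ = (u₀ + m).sum := (Multiset.sum_add _ _).symm
    _ ≤ S (core + pr) (Multiset.card u₀ + Multiset.card m) :=
        sum_le_S (add_le_add hu₀ hm) (by rw [Multiset.card_add])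
    _ ≤ S (core + pr) k := S_mono _ hcard

lemma S_le_of_exchange1 {core pr pr2 : Multiset ℕ}
    (h : ∀ u₁ ≤ pr, ∃ m, m ≤ pr2 ∧ Multiset.card m ≤ Multiset.card u₁ ∧ u₁.sum ≤ m.sum + 1)
    (k : ℕ) : S (core + pr) k ≤ S (core + pr2) k + 1 := by
  obtain ⟨u₀, u₁, hu₀, hu₁, hu⟩ := le_add_decomp (topk_le (core + pr) k)
  obtain ⟨m, hm, hmc, hms⟩ := h u₁ hu₁
  have hcard : Multiset.card u₀ + Multiset.card m ≤ k := by
    have := card_topk (core + pr) k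
    rw [hu, Multiset.card_add] at this
    omega
  have h1 : (u₀ + m).sum ≤ S (core + pr2) (Multiset.card u₀ + Multiset.card m) :=
    sum_le_S (add_le_add hu₀ hm) (by rw [Multiset.card_add])
  have h2 : S (core + pr2) (Multiset.card u₀ + Multiset.card m) ≤ S (core + pr2) k :=
    S_mono _ hcard
  have h3 : S (core + pr) k = u₀.sum + u₁.sum := by
    rw [← sum_topk (core + pr) k, hu, Multiset.sum_add]
  have h4 : (u₀ + m).sum = u₀.sum + m.sum := Multiset.sum_add _ _
  omega

/-- a submultiset of a pair is 0, a singleton, or the pair -/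
lemma sub_pair_cases {u : Multiset ℕ} {y z : ℕ} (h : u ≤ ({y, z} : Multiset ℕ)) :
    u = 0 ∨ (∃ x, (x = y ∨ x = z) ∧ u = {x}) ∨ u = {y, z} := by
  have hc : Multiset.card u ≤ 2 := by
    have := Multiset.card_le_card h
    rwa [card_pair] at this
  interval_cases hcard : Multiset.card u
  · exact Or.inl (Multiset.card_eq_zero.mp hcard)
  · obtain ⟨x, hx⟩ := Multiset.card_eq_one.mp hcard
    refine Or.inr (Or.inl ⟨x, ?_, hx⟩)
    have : x ∈ ({y, z} : Multiset ℕ) := Multiset.mem_of_le h (hx ▸ Multiset.mem_singleton_self x)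
    exact mem_pair.mp this
  · exact Or.inr (Or.inr (Multiset.eq_of_le_of_card_le h (by rw [card_pair, hcard])))

lemma sub_singleton_cases {u : Multiset ℕ} {y : ℕ} (h : u ≤ ({y} : Multiset ℕ)) :
    u = 0 ∨ u = {y} := by
  have hc : Multiset.card u ≤ 1 := by
    have := Multiset.card_le_card h
    rwa [Multiset.card_singleton] at this
  interval_cases hcard : Multiset.card u
  · exact Or.inl (Multiset.card_eq_zero.mp hcard)
  · exact Or.inr (Multiset.eq_of_le_of_card_le h (by rw [Multiset.card_singleton, hcard]))

lemma Dom_step {r : Multiset ℕ} (hpos : Pos r) (hne : badSet r ≠ ∅) :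
    Dom r (stepBD r) := by
  have ha2 := aVal_two_le hpos hne
  intro k
  show S (stepBD r) k ≤ S r k
  by_cases hlow : lows r = 0
  · obtain ⟨h1, h2⟩ := step_decomp0 hne hlow
    rw [h2]
    conv_rhs => rw [h1]
    apply S_le_of_exchange
    intro u₁ hu₁
    rcases sub_pair_cases hu₁ with h | ⟨x, hx, h⟩ | h
    · exact ⟨0, Multiset.zero_le _, by simp [h], by simp [h]⟩
    · refine ⟨{aVal r}, le_refl _, ?_, ?_⟩
      · rw [h, Multiset.card_singleton, Multiset.card_singleton]
      · rw [h, Multiset.sum_singleton, Multiset.sum_singleton]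
        omega
    · refine ⟨{aVal r}, le_refl _, ?_, ?_⟩
      · rw [h, Multiset.card_singleton, card_pair]; omega
      · rw [h, Multiset.sum_singleton, sum_pair]; omega
  · obtain ⟨h1, h2⟩ := step_decomp hpos hne hlow
    have hb := bVal_le hlow
    rw [h2]
    conv_rhs => rw [h1]
    apply S_le_of_exchange
    intro u₁ hu₁
    rcases sub_pair_cases hu₁ with h | ⟨x, hx, h⟩ | h
    · exact ⟨0, Multiset.zero_le _, by simp [h], by simp [h]⟩
    · refine ⟨{aVal r}, Multiset.singleton_le.mpr (mem_pair.mpr (Or.inl rfl)), ?_, ?_⟩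
      · rw [h, Multiset.card_singleton, Multiset.card_singleton]
      · rw [h, Multiset.sum_singleton, Multiset.sum_singleton]
        omega
    · refine ⟨{aVal r, bVal r}, le_refl _, ?_, ?_⟩
      · rw [h, card_pair, card_pair]
      · rw [h, sum_pair, sum_pair]; omega

lemma DropLe1 {r : Multiset ℕ} (hpos : Pos r) (hne : badSet r ≠ ∅) (k : ℕ) :
    S r k ≤ S (stepBD r) k + 1 := by
  have ha2 := aVal_two_le hpos hne
  by_cases hlow : lows r = 0
  · obtain ⟨h1, h2⟩ := step_decomp0 hne hlow
    rw [h2]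
    conv_lhs => rw [h1]
    apply S_le_of_exchange1
    intro u₁ hu₁
    rcases sub_singleton_cases hu₁ with h | h
    · exact ⟨0, Multiset.zero_le _, by simp [h], by simp [h]⟩
    · refine ⟨{aVal r - 1}, Multiset.singleton_le.mpr (mem_pair.mpr (Or.inl rfl)), ?_, ?_⟩
      · rw [h, Multiset.card_singleton, Multiset.card_singleton]
      · rw [h, Multiset.sum_singleton, Multiset.sum_singleton]
        omega
  · obtain ⟨h1, h2⟩ := step_decomp hpos hne hlow
    have hb := bVal_le hlow
    rw [h2]
    conv_lhs => rw [h1]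
    apply S_le_of_exchange1
    intro u₁ hu₁
    rcases sub_pair_cases hu₁ with h | ⟨x, hx, h⟩ | h
    · exact ⟨0, Multiset.zero_le _, by simp [h], by simp [h]⟩
    · rcases hx with hx | hx
      · refine ⟨{aVal r - 1}, Multiset.singleton_le.mpr (mem_pair.mpr (Or.inl rfl)), ?_, ?_⟩
        · rw [h, Multiset.card_singleton, Multiset.card_singleton]
        · rw [h, Multiset.sum_singleton, Multiset.sum_singleton]
          omega
      · refine ⟨{bVal r + 1}, Multiset.singleton_le.mpr (mem_pair.mpr (Or.inr rfl)), ?_, ?_⟩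
        · rw [h, Multiset.card_singleton, Multiset.card_singleton]
        · rw [h, Multiset.sum_singleton, Multiset.sum_singleton]
          omega
    · refine ⟨{aVal r - 1, bVal r + 1}, le_refl _, ?_, ?_⟩
      · rw [h, card_pair, card_pair]
      · rw [h, sum_pair, sum_pair]; omega

/-! ## transfer lemmas : comparing p = r + pe with q' = stepBD r + pe -/

lemma filter_pair_ge_a {a b : ℕ} (hb : b < a) :
    ({a, b} : Multiset ℕ).filter (a ≤ ·) = {a} := by
  show (a ::ₘ {b}).filter (a ≤ ·) = {a}
  rw [Multiset.filter_cons, Multiset.filter_singleton, if_pos (le_refl a), if_neg (by omega)]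
  rfl

lemma filter_pair_lt_a {a x y : ℕ} (hx : x < a) (hy : y < a) :
    ({x, y} : Multiset ℕ).filter (a ≤ ·) = 0 := by
  show (x ::ₘ {y}).filter (a ≤ ·) = 0
  rw [Multiset.filter_cons, Multiset.filter_singleton, if_neg (by omega), if_neg (by omega)]
  rfl

lemma step_filter_a {r : Multiset ℕ} (hpos : Pos r) (hne : badSet r ≠ ∅) :
    r.filter (aVal r ≤ ·) = (stepBD r).filter (aVal r ≤ ·) + {aVal r} := by
  have ha2 := aVal_two_le hpos hne
  by_cases hlow : lows r = 0
  · obtain ⟨h1, h2⟩ := step_decomp0 hne hlow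
    set a := aVal r with ha
    conv_lhs => rw [h1]
    rw [h2, Multiset.filter_add, Multiset.filter_add, Multiset.filter_singleton,
      if_pos (le_refl _), filter_pair_lt_a (by omega) (by omega), add_zero]
  · obtain ⟨h1, h2⟩ := step_decomp hpos hne hlow
    have hb := bVal_le hlow
    set a := aVal r with ha
    set b := bVal r with hbd
    conv_lhs => rw [h1]
    rw [h2, Multiset.filter_add, Multiset.filter_add,
      filter_pair_ge_a (by omega), filter_pair_lt_a (by omega) (by omega), add_zero]

/-- low region : prefix sums don't drop -/
lemma ST_low {r : Multiset ℕ} (hpos : Pos r) (hne : badSet r ≠ ∅) (pe : Multiset ℕ)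
    {k : ℕ} (hk : k < N (r + pe) (aVal r)) :
    S (r + pe) k ≤ S (stepBD r + pe) k := by
  set a := aVal r with ha
  have hfa := step_filter_a hpos hne
  have hfp : (r + pe).filter (a ≤ ·) = ((stepBD r + pe).filter (a ≤ ·)) + {a} := by
    rw [Multiset.filter_add, Multiset.filter_add, hfa]
    rw [add_right_comm]
  have hcardX : Multiset.card ((stepBD r + pe).filter (a ≤ ·)) + 1 = N (r + pe) a := by
    have : N (r + pe) a = Multiset.card ((r + pe).filter (a ≤ ·)) := rfl
    rw [this, hfp, Multiset.card_add, Multiset.card_singleton]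
  have hXmem : ∀ x ∈ (stepBD r + pe).filter (a ≤ ·), a ≤ x :=
    fun x hx => (Multiset.mem_filter.mp hx).2
  calc S (r + pe) k = S ((r + pe).filter (a ≤ ·)) k := S_eq_S_filter (by omega)
    _ = S ((stepBD r + pe).filter (a ≤ ·) + {a}) k := by rw [hfp]
    _ = S ((stepBD r + pe).filter (a ≤ ·)) k := S_add_min hXmem (by omega)
    _ ≤ S (stepBD r + pe) k := S_le_S_of_le (Multiset.filter_le _ _) k

/-- high region, non-append case -/
lemma ST_high {r : Multiset ℕ} (hpos : Pos r) (hne : badSet r ≠ ∅) (hlow : lows r ≠ 0)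
    (pe : Multiset ℕ) {k : ℕ} (hk : N (r + pe) (bVal r + 1) < k) :
    S (r + pe) k ≤ S (stepBD r + pe) k := by
  set a := aVal r with ha
  set b := bVal r with hb
  set p := r + pe with hp
  have ha2 := aVal_two_le hpos hne
  have hble := bVal_le hlow
  obtain ⟨h1, h2⟩ := step_decomp hpos hne hlow
  -- q' = (p - {a,b}) + {a-1, b+1}
  have hpd : p = (r - {a, b} + pe) + ({a, b} : Multiset ℕ) := by
    rw [hp]
    conv_lhs => rw [h1]
    rw [add_right_comm]
  have hq' : stepBD r + pe = (r - {a, b} + pe) + ({a - 1, b + 1} : Multiset ℕ) := by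
    rw [h2, add_right_comm]
  -- the top-k witness contains a and b
  set u := topk p k with hu
  have hcount_a : 1 ≤ u.count a := by
    rw [hu, count_topk]
    have hsplit := N_split p a
    have hca : 1 ≤ p.count a := by
      apply Multiset.count_pos.mpr
      rw [hp, Multiset.mem_add]
      exact Or.inl (aVal_mem_r (aVal_mem hne))
    have h3 : N p a ≤ N p (b + 1) := N_anti p (by omega)
    have h4 : N p (a + 1) ≤ N p a := N_anti p (by omega)
    omega
  have hcount_b : 1 ≤ u.count b := by
    rw [hu, count_topk]
    have hsplit := N_split p b
    have hcb : 1 ≤ p.count b := by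
      apply Multiset.count_pos.mpr
      rw [hp, Multiset.mem_add]
      exact Or.inl (bVal_mem_r hlow)
    have h4 : N p (b + 1) ≤ N p b := N_anti p (by omega)
    omega
  have hpair_u : ({a, b} : Multiset ℕ) ≤ u := by
    rw [Multiset.le_iff_count]
    intro v
    rw [count_pair]
    rcases eq_or_ne v a with hva | hva
    · subst hva
      rw [if_pos rfl, if_neg (by omega)]
      omega
    · rw [if_neg hva]
      rcases eq_or_ne v b with hvb | hvb
      · subst hvb
        rw [if_pos rfl]
        omega
      · rw [if_neg hvb]
        omega
  have hu_dec : u = (u - {a, b}) + {a, b} := (tsub_add_cancel_of_le hpair_u).symm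
  set u' := (u - ({a, b} : Multiset ℕ)) + ({a - 1, b + 1} : Multiset ℕ) with hu'
  have hu'_le : u' ≤ stepBD r + pe := by
    rw [hq', hu']
    refine add_le_add ?_ le_rfl
    have : u ≤ p := topk_le p k
    calc u - ({a, b} : Multiset ℕ) ≤ p - {a, b} := tsub_le_tsub_right this _
      _ = r - {a, b} + pe := by rw [hpd, add_tsub_cancel_right]
  have hcard_u' : Multiset.card u' = Multiset.card u := by
    rw [hu', Multiset.card_add, card_pair]
    conv_rhs => rw [hu_dec]
    rw [Multiset.card_add, card_pair]
  have hsum_u' : u'.sum = u.sum := by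
    rw [hu', Multiset.sum_add, sum_pair]
    conv_rhs => rw [hu_dec]
    rw [Multiset.sum_add, sum_pair]
    omega
  calc S p k = u.sum := (sum_topk p k).symm
    _ = u'.sum := hsum_u'.symm
    _ ≤ S (stepBD r + pe) k := sum_le_S hu'_le (by rw [hcard_u']; exact card_topk p k)

/-- high region, append case -/
lemma ST_high0 {r : Multiset ℕ} (hpos : Pos r) (hne : badSet r ≠ ∅) (hlow : lows r = 0)
    (pe : Multiset ℕ) {k : ℕ} (hk : Multiset.card (r + pe) < k) :
    S (r + pe) k ≤ S (stepBD r + pe) k := by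
  obtain ⟨h1, h2⟩ := step_decomp0 hne hlow
  have hcards : Multiset.card (stepBD r + pe) = Multiset.card (r + pe) + 1 := by
    rw [h2]
    conv_rhs => rw [h1]
    rw [Multiset.card_add, Multiset.card_add, Multiset.card_add, Multiset.card_add,
      card_pair, Multiset.card_singleton]
    omega
  have hsums : (stepBD r + pe).sum = (r + pe).sum := by
    rw [Multiset.sum_add, Multiset.sum_add, step_sum hpos hne]
  rw [S_of_card_le _ (by omega), S_of_card_le _ (by omega), hsums]

/-- prefix sums drop by at most one -/
lemma ST_drop {r : Multiset ℕ} (hpos : Pos r) (hne : badSet r ≠ ∅) (pe : Multiset ℕ)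
    (k : ℕ) : S (r + pe) k ≤ S (stepBD r + pe) k + 1 := by
  obtain ⟨u₁, u₂, hu₁, hu₂, hud⟩ := le_add_decomp (topk_le (r + pe) k)
  have hcards : Multiset.card u₁ + Multiset.card u₂ ≤ k := by
    have := card_topk (r + pe) k
    rw [hud, Multiset.card_add] at this
    omega
  calc S (r + pe) k = (topk (r + pe) k).sum := (sum_topk _ _).symm
    _ = u₁.sum + u₂.sum := by rw [hud, Multiset.sum_add]
    _ ≤ S r (Multiset.card u₁) + S pe (Multiset.card u₂) :=
        Nat.add_le_add (sum_le_S hu₁ (le_refl _)) (sum_le_S hu₂ (le_refl _))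
    _ ≤ (S (stepBD r) (Multiset.card u₁) + 1) + S pe (Multiset.card u₂) :=
        Nat.add_le_add_right (DropLe1 hpos hne _) _
    _ = S (stepBD r) (Multiset.card u₁) + S pe (Multiset.card u₂) + 1 := by omega
    _ ≤ S (stepBD r + pe) (Multiset.card u₁ + Multiset.card u₂) + 1 :=
        Nat.add_le_add_right (S_add_ge _ _ _ _) 1
    _ ≤ S (stepBD r + pe) k + 1 := Nat.add_le_add_right (S_mono _ hcards) 1

/-! ## middle region : strict drop for BD partitions -/

lemma ST_mid {p t : Multiset ℕ} {a c B : ℕ}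
    (ha0 : 0 < a) (hae : Even a) (haodd : Odd (p.count a))
    (hbig : ∀ v, Even v → a < v → Even (p.count v))
    (hc : Odd c) (hc0 : 0 < c)
    (hstruct : ∀ x ∈ p, a - 1 ≤ x ∨ x = c ∨ x ≤ B) (hB : B < a - 1)
    (ht : isBD t) (hdom : Dom p t)
    {k : ℕ} (hk1 : N p a ≤ k) (hk2 : k ≤ N p (B + 1)) :
    S t k < S p k := by
  have ha2 : 2 ≤ a := by rcases hae with ⟨e, he⟩; omega
  have hle : S t k ≤ S p k := hdom k
  rcases Nat.lt_or_ge (S t k) (S p k) with h | h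
  · exact h
  have heq : S t k = S p k := by omega
  exfalso
  rcases Nat.eq_or_lt_of_le hk1 with hk1e | hk1s
  · exact KL0 ha0 hae haodd hbig ht hdom (hk1e ▸ heq)
  rcases le_or_gt k (N p (a - 1)) with hmid | hczone
  · -- zone at value a - 1
    have hodd1 : Odd (a - 1) := by
      rcases hae with ⟨e, he⟩
      exact ⟨e - 1, by omega⟩
    have hNa : N p (a - 1 + 1) = N p a := by rw [show a - 1 + 1 = a by omega]
    exact KL2 ha0 hae haodd hbig ht hdom hodd1 (by omega) (by omega)
      (hNa ▸ (N_anti p (by omega))) (by rw [hNa]; omega) hmid heq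
  · -- c-zone
    by_cases hcz : B < c ∧ c ≤ a - 2
    · have hE2 : N p (B + 1) = N p c := by
        unfold N
        apply congrArg
        apply Multiset.filter_congr
        intro x hx
        rcases hstruct x hx with h' | h' | h' <;> omega
      have hE3 : N p (c + 1) = N p (a - 1) := by
        unfold N
        apply congrArg
        apply Multiset.filter_congr
        intro x hx
        rcases hstruct x hx with h' | h' | h' <;> omega
      exact KL2 ha0 hae haodd hbig ht hdom hc hc0 (by omega)
        (le_of_eq hE3) (by omega) (by omega) heq
    · have hE1 : N p (B + 1) = N p (a - 1) := by
        unfold N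
        apply congrArg
        apply Multiset.filter_congr
        intro x hx
        rcases hstruct x hx with h' | h' | h' <;> omega
      omega

/-- the per-step transfer lemma : one algorithm step on `r` preserves the set of
BD partitions dominated by `r + replicate m c` -/
lemma ST2 {r : Multiset ℕ} (hpos : Pos r) (hne : badSet r ≠ ∅) {m c : ℕ}
    (hc : Odd c) (hc0 : 0 < c)
    {t : Multiset ℕ} (ht : isBD t) (hdom : Dom (r + Multiset.replicate m c) t) :
    Dom (stepBD r + Multiset.replicate m c) t := by
  set pe := Multiset.replicate m c with hpe
  set p := r + pe with hp
  set a := aVal r with ha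
  have ha2 := aVal_two_le hpos hne
  have haev : Even a := aVal_even (aVal_mem hne)
  have hppos : Pos p := by
    intro x hx
    rcases Multiset.mem_add.mp hx with hx | hx
    · exact hpos x hx
    · have := Multiset.eq_of_mem_replicate hx
      omega
  have hcount_even : ∀ v, Even v → p.count v = r.count v := by
    intro v hv
    have hcv : c ≠ v := by
      intro hcv
      rw [hcv] at hc
      rcases hc with ⟨e, he⟩
      rcases hv with ⟨f, hf⟩
      omega
    rw [hp, Multiset.count_add, hpe, Multiset.count_replicate, if_neg hcv, add_zero]
  have haodd_p : Odd (p.count a) := by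
    rw [hcount_even a haev]
    exact aVal_count_odd (aVal_mem hne)
  have hbig_p : ∀ v, Even v → a < v → Even (p.count v) := fun v hv hlt => by
    rw [hcount_even v hv]
    exact aVal_max hne hv hlt
  intro k
  show S t k ≤ S (stepBD r + pe) k
  have hdomk : S t k ≤ S p k := hdom k
  rcases lt_or_ge k (N p a) with hk | hk1
  · exact le_trans hdomk (ST_low hpos hne pe hk)
  by_cases hlowr : lows r = 0
  · rcases Nat.lt_or_ge (Multiset.card p) k with hk2 | hk2
    · exact le_trans hdomk (ST_high0 hpos hne hlowr pe hk2)
    · have hstruct : ∀ x ∈ p, a - 1 ≤ x ∨ x = c ∨ x ≤ 0 := by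
        intro x hx
        rcases Multiset.mem_add.mp hx with hx | hx
        · left
          by_contra hcon
          have hxl : x ∈ lows r := by
            rw [lows, Multiset.mem_filter]
            exact ⟨hx, by omega⟩
          rw [hlowr] at hxl
          exact absurd hxl (Multiset.notMem_zero x)
        · right; left
          exact Multiset.eq_of_mem_replicate hx
      have hcardN : N p 1 = Multiset.card p := by
        unfold N
        congr 1
        apply Multiset.filter_eq_self.mpr
        intro x hx
        exact hppos x hx
      have hmid := ST_mid (p := p) (by omega) haev haodd_p hbig_p hc hc0 hstruct
        (by omega) ht hdom hk1 (by rw [show (0:ℕ) + 1 = 1 from rfl, hcardN]; exact hk2)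
      have hdrop := ST_drop hpos hne pe k
      rw [← hp] at hdrop
      omega
  · rcases Nat.lt_or_ge (N p (bVal r + 1)) k with hk2 | hk2
    · exact le_trans hdomk (ST_high hpos hne hlowr pe hk2)
    · have hble := bVal_le hlowr
      have hstruct : ∀ x ∈ p, a - 1 ≤ x ∨ x = c ∨ x ≤ bVal r := by
        intro x hx
        rcases Multiset.mem_add.mp hx with hx | hx
        · rcases le_or_gt (a - 1) x with h | h
          · left; exact h
          · right; right
            exact bVal_max hlowr hx (by omega)
        · right; left
          exact Multiset.eq_of_mem_replicate hx
      have hmid := ST_mid (p := p) (by omega) haev haodd_p hbig_p hc hc0 hstruct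
        (by omega) ht hdom hk1 hk2
      have hdrop := ST_drop hpos hne pe k
      rw [← hp] at hdrop
      omega

/-! ## the algorithm and its specification -/

def algoAux : ℕ → Multiset ℕ → Multiset ℕ
  | 0, p => p
  | (n+1), p => if badSet p = ∅ then p else algoAux n (stepBD p)

def algo (p : Multiset ℕ) : Multiset ℕ := algoAux (mu p) p

lemma algoAux_spec : ∀ n r, Pos r → mu r ≤ n →
    Pos (algoAux n r) ∧ (algoAux n r).sum = r.sum ∧ isBD (algoAux n r) ∧
    (∀ m c, Odd c → 0 < c →
      Dom (r + Multiset.replicate m c) (algoAux n r + Multiset.replicate m c) ∧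
      (∀ t, isBD t → Dom (r + Multiset.replicate m c) t →
        Dom (algoAux n r + Multiset.replicate m c) t)) := by
  intro n
  induction n with
  | zero =>
    intro r hpos hmu
    have hr0 : r = 0 := by
      by_contra hne
      obtain ⟨y, hy⟩ := Multiset.exists_mem_of_ne_zero hne
      have h1 : y * y ≤ mu r := by
        apply Multiset.single_le_sum (fun z _ => Nat.zero_le z)
        exact Multiset.mem_map_of_mem _ hy
      have := hpos y hy
      nlinarith
    subst hr0
    refine ⟨fun x hx => absurd hx (Multiset.notMem_zero x), rfl, ?_, ?_⟩
    · intro v _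
      rw [show algoAux 0 0 = 0 from rfl, Multiset.count_zero]
      exact Even.zero
    · intro m c _ _
      exact ⟨Dom_refl _, fun t _ hd => hd⟩
  | succ n ih =>
    intro r hpos hmu
    by_cases hbs : badSet r = ∅
    · rw [show algoAux (n+1) r = if badSet r = ∅ then r else algoAux n (stepBD r) from rfl,
        if_pos hbs]
      exact ⟨hpos, rfl, isBD_of_badSet_empty hpos hbs,
        fun m c _ _ => ⟨Dom_refl _, fun t _ hd => hd⟩⟩
    · have heq : algoAux (n+1) r = algoAux n (stepBD r) := by
        rw [show algoAux (n+1) r = if badSet r = ∅ then r else algoAux n (stepBD r) from rfl,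
          if_neg hbs]
      have hmu' : mu (stepBD r) ≤ n := by
        have := step_mu hpos hbs
        omega
      obtain ⟨P1, P2, P3, P4⟩ := ih (stepBD r) (step_pos hpos hbs) hmu'
      rw [heq]
      refine ⟨P1, by rw [P2, step_sum hpos hbs], P3, ?_⟩
      intro m c hc hc0
      obtain ⟨Q1, Q2⟩ := P4 m c hc hc0
      constructor
      · exact Dom_trans (Dom_add_right (Dom_step hpos hbs) _) Q1
      · intro t ht hd
        exact Q2 t ht (ST2 hpos hbs hc hc0 ht hd)

lemma algo_spec {r : Multiset ℕ} (hpos : Pos r) :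
    Pos (algo r) ∧ (algo r).sum = r.sum ∧ isBD (algo r) ∧
    (∀ m c, Odd c → 0 < c →
      Dom (r + Multiset.replicate m c) (algo r + Multiset.replicate m c) ∧
      (∀ t, isBD t → Dom (r + Multiset.replicate m c) t →
        Dom (algo r + Multiset.replicate m c) t)) :=
  algoAux_spec (mu r) r hpos (le_refl _)

/-- `algo r + c^m` is the B(D)-collapse of `r + c^m` -/
lemma isCollapse_algo {r : Multiset ℕ} (hpos : Pos r) (m c : ℕ) (hc : Odd c) (hc0 : 0 < c) :
    IsCollapse PType.B (r + Multiset.replicate m c) (algo r + Multiset.replicate m c) := by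
  obtain ⟨P1, P2, P3, P4⟩ := algo_spec hpos
  obtain ⟨Q1, Q2⟩ := P4 m c hc hc0
  refine ⟨⟨?_, ?_⟩, ?_, Q1, ?_⟩
  · intro y hy
    rcases Multiset.mem_add.mp hy with hy | hy
    · exact P1 y hy
    · have := Multiset.eq_of_mem_replicate hy
      omega
  · rw [Multiset.sum_add, Multiset.sum_add, P2]
  · show ∀ v, Even v → Even ((algo r + Multiset.replicate m c).count v)
    intro v hv
    have hcv : c ≠ v := by
      intro hcv
      rw [hcv] at hc
      rcases hc with ⟨e, he⟩
      rcases hv with ⟨f, hf⟩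
      omega
    rw [Multiset.count_add, Multiset.count_replicate, if_neg hcv, add_zero]
    exact P3 v hv
  · intro t _ ht hd
    exact Q2 t ht hd

lemma isCollapse_unique {X : PType} {p q q' : Multiset ℕ}
    (h : IsCollapse X p q) (h' : IsCollapse X p q') : q = q' := by
  have d1 : Dom q q' := h.2.2.2 q' h'.1 h'.2.1 h'.2.2.1
  have d2 : Dom q' q := h'.2.2.2 q h.1 h.2.1 h.2.2.1
  exact eq_of_S_eq h.1.1 h'.1.1 (fun k => le_antisymm (d2 k) (d1 k))

lemma collapse_eq {X : PType} {p q : Multiset ℕ} (hcoll : IsCollapse X p q) :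
    collapse X p = q := by
  unfold collapse
  split
  next h => exact isCollapse_unique h.choose_spec hcoll
  next h => exact absurd ⟨q, hcoll⟩ h

end BV

/-- Let `p` be a partition of `2n+1` and `x` a positive integer such
that `p` has a part equal to `2x+1`.  Let `r := p_{>2x+1} ⊔ p_{<2x+1}` be the partition
obtained by removing all parts equal to `2x+1`.  Then `p_B = r_X ⊔ p_{=2x+1}`, with
`X = B` if `|r|` is odd and `X = D` if `|r|` is even. -/
theorem collapseB_remove_odd_part (n x : ℕ) (hx : 0 < x)
    (p : Multiset ℕ) (hp : IsPartitionOf p (2 * n + 1)) (hmem : 2 * x + 1 ∈ p) :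
    collapse .B p =
      (if Odd (p.filter (fun y => y ≠ 2 * x + 1)).sum then
          collapse .B (p.filter (fun y => y ≠ 2 * x + 1))
        else collapse .D (p.filter (fun y => y ≠ 2 * x + 1))) +
      p.filter (fun y => y = 2 * x + 1) := by
  have hppos : BV.Pos p := hp.1
  have hc : Odd (2 * x + 1) := ⟨x, by ring⟩
  have hc0 : 0 < 2 * x + 1 := by omega
  set r := p.filter (fun y => y ≠ 2 * x + 1) with hr
  set pe := p.filter (fun y => y = 2 * x + 1) with hpe0
  have hrpos : BV.Pos r := fun y hy =>
    hppos y (Multiset.mem_of_le (Multiset.filter_le _ p) hy)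
  have hpe : pe = Multiset.replicate (p.count (2 * x + 1)) (2 * x + 1) := by
    rw [hpe0]
    exact Multiset.filter_eq' p (2 * x + 1)
  have hsplit : r + pe = p := by
    rw [hr, hpe0, add_comm]
    exact Multiset.filter_add_not _ p
  have hcb : collapse PType.B p = BV.algo r + pe := by
    rw [← hsplit, hpe]
    exact BV.collapse_eq (BV.isCollapse_algo hrpos _ _ hc hc0)
  have h0 := BV.isCollapse_algo hrpos 0 (2 * x + 1) hc hc0
  rw [Multiset.replicate_zero, add_zero, add_zero] at h0
  have hcr : collapse PType.B r = BV.algo r := BV.collapse_eq h0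
  have hcrD : collapse PType.D r = BV.algo r := by
    apply BV.collapse_eq
    exact ⟨h0.1, h0.2.1, h0.2.2.1, h0.2.2.2⟩
  rw [hcb, hcr, hcrD, ite_self]
end
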